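/- arXiv:1503.02582 — 6 statements merged into one kernel-verified Lean document; each statement's English description precedes it below -/
import Mathlib

section
/- Let E ⊆ ℂ be a compact set. If E is H∞-removable, then E is totally disconnected. -/
/-- A compact set `E ⊆ ℂ` is `H∞`-removable if every bounded holomorphic function on
`ℂ \ E` is constant. -/
def HInftyRemovable (E : Set ℂ) : Prop :=
  ∀ f : ℂ → ℂ, DifferentiableOn ℂ f Eᶜ → (∃ M : ℝ, ∀ z ∈ Eᶜ, ‖f z‖ ≤ M) →
    ∀ z ∈ Eᶜ, ∀ w ∈ Eᶜ, f z = f w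

/-!
Suppose `E` contains a preconnected set `t` with two points `a ≠ b`, and let `Ω` be a component
of `ℂ \ E`. For two polygonal chains in `Ω` from `z₀` to `z`, the discrete logarithms of
`(z - c) / (z₀ - c)` along them differ by an element of `2πiℤ` that depends continuously on
`c ∈ t`, hence not at all; so `log ((z - a) / (z - b))` continues along chains in `Ω` without
monodromy, and `(z - a) / (z - b)` has a holomorphic square root `h` on `Ω`. As `h ^ 2` is
injective, `h(Ω)` and `-h(Ω)` are disjoint, while `h(Ω)` contains a disc around `h z₀` by the
open mapping theorem. Hence `1 / (h + h z₀)`, extended by `0` off `Ω`, is a bounded nonconstant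
holomorphic function on `ℂ \ E`.
-/

open Complex Set Filter Topology Metric

-- A polygonal chain is encoded by its first vertex `x` and the list `l` of its other vertices.
def chainEnd (x : ℂ) (l : List ℂ) : ℂ := l.getLastD x

noncomputable def chainLog (c : ℂ) : ℂ → List ℂ → ℂ
  | _, [] => 0
  | x, y :: l => log ((y - c) / (x - c)) + chainLog c y l

def ChainIn (S : Set ℂ) : ℂ → List ℂ → Prop
  | _, [] => True
  | x, y :: l => segment ℝ x y ⊆ S ∧ ChainIn S y l

@[simp] lemma chainEnd_nil (x : ℂ) : chainEnd x [] = x := rfl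

@[simp] lemma chainEnd_cons (x y : ℂ) (l : List ℂ) : chainEnd x (y :: l) = chainEnd y l := by
  cases l <;> rfl

lemma chainEnd_append (x : ℂ) (l₁ l₂ : List ℂ) :
    chainEnd x (l₁ ++ l₂) = chainEnd (chainEnd x l₁) l₂ := by
  induction l₁ generalizing x with
  | nil => rfl
  | cons y l ih => simp [ih]

@[simp] lemma chainLog_nil (c x : ℂ) : chainLog c x [] = 0 := rfl

@[simp] lemma chainLog_cons (c x y : ℂ) (l : List ℂ) :
    chainLog c x (y :: l) = log ((y - c) / (x - c)) + chainLog c y l := rfl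

lemma chainLog_append (c x : ℂ) (l₁ l₂ : List ℂ) :
    chainLog c x (l₁ ++ l₂) = chainLog c x l₁ + chainLog c (chainEnd x l₁) l₂ := by
  induction l₁ generalizing x with
  | nil => simp
  | cons y l ih => simp [ih, add_assoc]

lemma ChainIn.append {S : Set ℂ} {x : ℂ} {l₁ l₂ : List ℂ} (h₁ : ChainIn S x l₁)
    (h₂ : ChainIn S (chainEnd x l₁) l₂) : ChainIn S x (l₁ ++ l₂) := by
  induction l₁ generalizing x with
  | nil => exact h₂
  | cons y l ih => exact ⟨h₁.1, ih h₁.2 (by simpa using h₂)⟩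

lemma div_sub_mem_slitPlane {x y c : ℂ} (h : c ∉ segment ℝ x y) :
    (y - c) / (x - c) ∈ slitPlane := by
  have hx : x - c ≠ 0 := sub_ne_zero.mpr fun hxc => h (hxc ▸ left_mem_segment ℝ x y)
  by_contra hu
  rw [mem_slitPlane_iff, not_or, not_lt, not_not] at hu
  set u := (y - c) / (x - c) with hu_def
  have hy : y - c = (-u.re) • (c - x) := by
    have hu_re : u = u.re := Complex.ext rfl (by simp [hu.2])
    rw [real_smul, ofReal_neg, ← hu_re, hu_def]
    field_simp
    ring
  exact h (mem_segment_iff_sameRay.2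
    (hy ▸ SameRay.sameRay_nonneg_smul_right _ (neg_nonneg.2 hu.1)))

lemma exp_chainLog {S : Set ℂ} {c x : ℂ} {l : List ℂ} (hl : ChainIn S x l) (hx : x ∈ S)
    (hc : c ∉ S) : exp (chainLog c x l) = (chainEnd x l - c) / (x - c) := by
  induction l generalizing x with
  | nil => simp [sub_ne_zero.2 (ne_of_mem_of_not_mem hx hc)]
  | cons y l ih =>
    obtain ⟨hxy, hl⟩ := hl
    have hy : y ∈ S := hxy (right_mem_segment ℝ x y)
    have hu := slitPlane_ne_zero (div_sub_mem_slitPlane fun h => hc (hxy h))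
    rw [chainLog_cons, exp_add, exp_log hu, ih hl hy, chainEnd_cons]
    field_simp [sub_ne_zero.2 (ne_of_mem_of_not_mem hy hc)]

lemma continuousAt_chainLog {S : Set ℂ} {c x : ℂ} {l : List ℂ} (hl : ChainIn S x l)
    (hc : c ∉ S) : ContinuousAt (fun c => chainLog c x l) c := by
  induction l generalizing x with
  | nil => exact continuousAt_const
  | cons y l ih =>
    obtain ⟨hxy, hl⟩ := hl
    have hx : x - c ≠ 0 :=
      sub_ne_zero.2 (ne_of_mem_of_not_mem (hxy (left_mem_segment ℝ x y)) hc)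
    refine ((ContinuousAt.div (by fun_prop) (by fun_prop) hx).clog
      (div_sub_mem_slitPlane fun h => hc (hxy h))).add (ih hl)

lemma IsPreconnected.eq_of_exp_eq_one {α : Type*} [TopologicalSpace α] {t : Set α}
    (ht : IsPreconnected t) {F : α → ℂ} (hF : ContinuousOn F t) (h1 : ∀ c ∈ t, exp (F c) = 1)
    {a b : α} (ha : a ∈ t) (hb : b ∈ t) : F a = F b := by
  have hmem : ∀ c ∈ t, (F c).re = 0 ∧ (F c).im ∈ AddSubgroup.zmultiples (2 * Real.pi) := by
    intro c hc
    obtain ⟨n, hn⟩ := exp_eq_one_iff.1 (h1 c hc)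
    exact ⟨by simp [hn], n, by simp [hn]⟩
  refine Complex.ext (by rw [(hmem a ha).1, (hmem b hb).1]) ?_
  exact ht.constant_of_mapsTo (isDiscrete_iff_discreteTopology.2
    (inferInstanceAs (DiscreteTopology (AddSubgroup.zmultiples (2 * Real.pi)))))
    (continuous_im.comp_continuousOn hF) (fun c hc => (hmem c hc).2) ha hb

lemma chainLog_sub_chainLog_eq {S t : Set ℂ} (ht : IsPreconnected t) (htS : Disjoint t S)
    {a b x : ℂ} (ha : a ∈ t) (hb : b ∈ t) (hx : x ∈ S) {l₁ l₂ : List ℂ} (h₁ : ChainIn S x l₁)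
    (h₂ : ChainIn S x l₂) (hend : chainEnd x l₁ = chainEnd x l₂) :
    chainLog a x l₁ - chainLog b x l₁ = chainLog a x l₂ - chainLog b x l₂ := by
  have key := ht.eq_of_exp_eq_one (F := fun c => chainLog c x l₁ - chainLog c x l₂)
    (fun c hc => ((continuousAt_chainLog h₁ (disjoint_left.1 htS hc)).sub
      (continuousAt_chainLog h₂ (disjoint_left.1 htS hc))).continuousWithinAt)
    (fun c hc => by
      rw [exp_sub, exp_chainLog h₁ hx (disjoint_left.1 htS hc), hend,
        ← exp_chainLog h₂ hx (disjoint_left.1 htS hc), div_self (exp_ne_zero _)]) ha hb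
  linear_combination key

lemma IsPreconnected.exists_chainIn {Ω : Set ℂ} (hΩc : IsPreconnected Ω) (hΩo : IsOpen Ω)
    {x y : ℂ} (hx : x ∈ Ω) (hy : y ∈ Ω) : ∃ l, ChainIn Ω x l ∧ chainEnd x l = y := by
  refine hΩc.induction₂' (fun x y => ∃ l, ChainIn Ω x l ∧ chainEnd x l = y) (fun x hx => ?_)
    (fun x y z _ _ _ ⟨l₁, h₁, e₁⟩ ⟨l₂, h₂, e₂⟩ =>
      ⟨l₁ ++ l₂, h₁.append (e₁ ▸ h₂), by rw [chainEnd_append, e₁, e₂]⟩) hx hy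
  obtain ⟨ε, hε, hball⟩ := Metric.isOpen_iff.1 hΩo x hx
  filter_upwards [mem_nhdsWithin_of_mem_nhds (ball_mem_nhds x hε)] with y hy
  have hseg : segment ℝ x y ⊆ Ω :=
    ((convex_ball x ε).segment_subset (mem_ball_self hε) hy).trans hball
  exact ⟨⟨[y], ⟨hseg, trivial⟩, rfl⟩, ⟨[x], ⟨segment_symm ℝ x y ▸ hseg, trivial⟩, rfl⟩⟩

lemma IsPreconnected.exists_log_div_sub_sub {Ω t : Set ℂ} (hΩc : IsPreconnected Ω)
    (hΩo : IsOpen Ω) (ht : IsPreconnected t) (htΩ : Disjoint t Ω) {a b : ℂ} (ha : a ∈ t)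
    (hb : b ∈ t) :
    ∃ G : ℂ → ℂ, DifferentiableOn ℂ G Ω ∧ ∀ z ∈ Ω, exp (G z) = (z - a) / (z - b) := by
  rcases Ω.eq_empty_or_nonempty with rfl | ⟨z₀, hz₀⟩
  · exact ⟨0, differentiableOn_empty, fun _ h => h.elim⟩
  have hc : ∀ {c}, c ∈ t → c ∉ Ω := fun hc => disjoint_left.1 htΩ hc
  have hne : ∀ {z}, z ∈ Ω → ∀ {c}, c ∈ t → z - c ≠ 0 := fun hz _ hct =>
    sub_ne_zero.2 fun h => hc hct (h ▸ hz)
  choose! L hL hLend using fun z (hz : z ∈ Ω) => hΩc.exists_chainIn hΩo hz₀ hz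
  let G z := log ((z₀ - a) / (z₀ - b)) + (chainLog a z₀ (L z) - chainLog b z₀ (L z))
  have hG : ∀ z ∈ Ω, ∀ l, ChainIn Ω z₀ l → chainEnd z₀ l = z →
      G z = log ((z₀ - a) / (z₀ - b)) + (chainLog a z₀ l - chainLog b z₀ l) :=
    fun z hz l hl hend => congrArg (_ + ·)
      (chainLog_sub_chainLog_eq ht htΩ ha hb hz₀ (hL z hz) hl (hend ▸ hLend z hz))
  refine ⟨G, fun z₁ hz₁ => ?_, fun z hz => ?_⟩
  · obtain ⟨ε, hε, hball⟩ := Metric.isOpen_iff.1 hΩo z₁ hz₁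
    have hloc : ∀ z ∈ ball z₁ ε,
        G z = G z₁ + (log ((z - a) / (z₁ - a)) - log ((z - b) / (z₁ - b))) := by
      intro z hz
      have hseg : segment ℝ z₁ z ⊆ Ω :=
        ((convex_ball z₁ ε).segment_subset (mem_ball_self hε) hz).trans hball
      have hl : ChainIn Ω z₀ (L z₁ ++ [z]) :=
        (hL z₁ hz₁).append (by rw [hLend z₁ hz₁]; exact ⟨hseg, trivial⟩)
      rw [hG z (hball hz) _ hl (by rw [chainEnd_append, hLend z₁ hz₁]; rfl), chainLog_append,
        chainLog_append, hLend z₁ hz₁]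
      simp only [chainLog_cons, chainLog_nil, G]
      ring
    refine (Filter.eventuallyEq_of_mem (ball_mem_nhds z₁ hε) hloc).differentiableAt_iff.2 ?_
      |>.differentiableWithinAt
    have hlog : ∀ c ∈ t, DifferentiableAt ℂ (fun z => log ((z - c) / (z₁ - c))) z₁ :=
      fun c hct => ((differentiableAt_id.sub_const c).div_const _).clog
        (by simp [div_self (hne hz₁ hct)])
    exact ((hlog a ha).sub (hlog b hb)).const_add _
  · rw [exp_add, exp_sub, exp_log (div_ne_zero (hne hz₀ ha) (hne hz₀ hb)),
      exp_chainLog (hL z hz) hz₀ (hc ha), exp_chainLog (hL z hz) hz₀ (hc hb), hLend z hz]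
    field_simp [hne hz ha, hne hz hb, hne hz₀ ha, hne hz₀ hb]

lemma injOn_div_sub_sub {a b : ℂ} (hab : a ≠ b) :
    InjOn (fun z => (z - a) / (z - b)) {b}ᶜ := by
  intro z hz w hw hzw
  rw [mem_compl_singleton_iff, ← sub_ne_zero] at hz hw
  have : (a - b) * (z - w) = 0 := by
    linear_combination (div_eq_div_iff hz hw).1 hzw
  simpa [sub_eq_zero, hab] using this

lemma IsOpen.exists_forall_le_norm_add_of_injOn_sq {Ω : Set ℂ} (hΩ : IsOpen Ω) {h : ℂ → ℂ}
    (hd : DifferentiableOn ℂ h Ω) (hne : ∀ z ∈ Ω, h z ≠ 0) (hinj : InjOn (fun z => h z ^ 2) Ω)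
    {z₀ : ℂ} (hz₀ : z₀ ∈ Ω) : ∃ r > 0, ∀ z ∈ Ω, r ≤ ‖h z + h z₀‖ := by
  have himage : h '' Ω ∈ 𝓝 (h z₀) := by
    rcases (hd.analyticAt (hΩ.mem_nhds hz₀)).eventually_constant_or_nhds_le_map_nhds with
      hconst | hopen
    · have hsingle : ∀ᶠ z in 𝓝[≠] z₀, z = z₀ := by
        filter_upwards [nhdsWithin_le_nhds (hconst.and (hΩ.mem_nhds hz₀))] with z ⟨hz, hzΩ⟩
        exact hinj hzΩ hz₀ (by simp only [hz])
      obtain ⟨z, hz, hne⟩ := (hsingle.and self_mem_nhdsWithin).exists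
      exact absurd hz hne
    · exact hopen (image_mem_map (hΩ.mem_nhds hz₀))
  obtain ⟨r, hr, hball⟩ := Metric.mem_nhds_iff.1 himage
  refine ⟨r, hr, fun z hz => not_lt.1 fun hlt => ?_⟩
  obtain ⟨w, hw, hwz⟩ := hball (show -h z ∈ ball (h z₀) r by
    rwa [mem_ball, dist_eq_norm, sub_eq_neg_add, ← neg_add, norm_neg, add_comm])
  have hwz' : w = z := hinj hw hz (by simp only [hwz, neg_sq])
  subst hwz'
  exact hne w hw (by linear_combination hwz / 2)

lemma DifferentiableOn.indicator_connectedComponentIn {𝕜 E F : Type*}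
    [NontriviallyNormedField 𝕜] [NormedAddCommGroup E] [NormedSpace 𝕜 E] [LocallyConnectedSpace E]
    [NormedAddCommGroup F] [NormedSpace 𝕜 F] {U : Set E} (hU : IsOpen U) {x : E} {f : E → F}
    (hf : DifferentiableOn 𝕜 f (connectedComponentIn U x)) :
    DifferentiableOn 𝕜 ((connectedComponentIn U x).indicator f) U := by
  intro z hz
  refine DifferentiableAt.differentiableWithinAt ?_
  by_cases hzC : z ∈ connectedComponentIn U x
  · have hC := hU.connectedComponentIn.mem_nhds hzC
    exact ((hf z hzC).differentiableAt hC).congr_of_eventuallyEq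
      (Filter.eventuallyEq_of_mem hC fun w hw => indicator_of_mem hw f)
  · have hC := hU.connectedComponentIn.mem_nhds (mem_connectedComponentIn hz)
    refine (differentiableAt_const (0 : F)).congr_of_eventuallyEq
      (Filter.eventuallyEq_of_mem hC fun w hw => indicator_of_notMem (fun hwx => hzC ?_) f)
    rw [connectedComponentIn_eq hwx, ← connectedComponentIn_eq hw]
    exact mem_connectedComponentIn hz

/-- If a compact set `E ⊆ ℂ` is `H∞`-removable, then `E` is totally disconnected. -/
theorem stmt_0 (E : Set ℂ) (hE : IsCompact E) (hrem : HInftyRemovable E) :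
    IsTotallyDisconnected E := by
  intro t htE ht
  by_contra hsub
  obtain ⟨a, ha, b, hb, hab⟩ := not_subsingleton_iff.1 hsub
  obtain ⟨z₀, hz₀⟩ := nonempty_compl.2 hE.ne_univ
  set Ω := connectedComponentIn Eᶜ z₀
  have hΩo : IsOpen Ω := hE.isClosed.isOpen_compl.connectedComponentIn
  have hz₀Ω : z₀ ∈ Ω := mem_connectedComponentIn hz₀
  have htΩ : Disjoint t Ω :=
    disjoint_left.2 fun c hc hcΩ => connectedComponentIn_subset _ _ hcΩ (htE hc)
  obtain ⟨G, hGd, hG⟩ :=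
    isPreconnected_connectedComponentIn.exists_log_div_sub_sub hΩo ht htΩ ha hb
  set h := fun z => exp (G z / 2)
  have hsq : ∀ z ∈ Ω, h z ^ 2 = (z - a) / (z - b) := fun z hz => by
    rw [← hG z hz, ← exp_nat_mul]
    ring_nf
  have hinj : InjOn (fun z => h z ^ 2) Ω :=
    ((injOn_div_sub_sub hab).mono fun z hz (hzb : z = b) =>
      disjoint_left.1 htΩ hb (hzb ▸ hz)).congr fun z hz => (hsq z hz).symm
  obtain ⟨r, hr, hbound⟩ := hΩo.exists_forall_le_norm_add_of_injOn_sq (hGd.div_const 2).cexp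
    (fun z _ => exp_ne_zero _) hinj hz₀Ω
  obtain ⟨z₁, hz₁Ω, hz₁⟩ : ∃ z₁ ∈ Ω, z₁ ≠ z₀ :=
    ((eventually_nhdsWithin_of_eventually_nhds (hΩo.mem_nhds hz₀Ω)).and
      (self_mem_nhdsWithin : ∀ᶠ z in 𝓝[≠] z₀, z ≠ z₀)).exists
  have hf := hrem (Ω.indicator fun z => (h z + h z₀)⁻¹)
    ((((hGd.div_const 2).cexp.add_const _).inv fun z hz =>
      norm_pos_iff.1 (hr.trans_le (hbound z hz))).indicator_connectedComponentIn
      hE.isClosed.isOpen_compl)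
    ⟨r⁻¹, fun z _ => by
      by_cases hz : z ∈ Ω
      · simpa [hz] using inv_anti₀ hr (hbound z hz)
      · simpa [hz] using hr.le⟩
    z₀ hz₀ z₁ (connectedComponentIn_subset _ _ hz₁Ω)
  simp only [indicator_of_mem hz₀Ω, indicator_of_mem hz₁Ω, inv_inj, add_left_inj] at hf
  exact hz₁ (hinj hz₁Ω hz₀Ω (by simp only [hf]))
end

section
/- Let E ⊆ ℂ be a compact set. The following are equivalent: (i) for every open set U ⊆ ℂ with E ⊆ U, every bounded holomorphic function on U \ E extends to a bounded holomorphic function on U (i.e. there is a bounded holomorphic g on U agreeing with f on U \ E); (ii) E is H∞-removable. -/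
open Complex Metric Set intervalIntegral
open scoped Real Interval Topology

noncomputable section

/-- The boundary integral over the rectangle with corners `z`, `w` (counterclockwise when `z` is
the lower left corner), written as in `Complex.integral_boundary_rect_eq_zero_of_differentiableOn`.
-/
def rectIntegral (φ : ℂ → ℂ) (z w : ℂ) : ℂ :=
  (∫ x : ℝ in z.re..w.re, φ (x + z.im * I)) - (∫ x : ℝ in z.re..w.re, φ (x + w.im * I)) +
    I • (∫ y : ℝ in z.im..w.im, φ (w.re + y * I)) - I • ∫ y : ℝ in z.im..w.im, φ (z.re + y * I)

theorem rectIntegral_eq_zero {φ : ℂ → ℂ} {z w : ℂ}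
    (hφ : DifferentiableOn ℂ φ ([[z.re, w.re]] ×ℂ [[z.im, w.im]])) : rectIntegral φ z w = 0 :=
  integral_boundary_rect_eq_zero_of_differentiableOn φ z w hφ

theorem integral_mul_inv_sub_eq_log {γ : ℝ → ℂ} {v σ c : ℂ} {a b : ℝ}
    (hγ : ∀ x, HasDerivAt γ v x) (hslit : ∀ x ∈ [[a, b]], σ * (γ x - c) ∈ slitPlane) :
    ∫ x in a..b, v * (γ x - c)⁻¹ = log (σ * (γ b - c)) - log (σ * (γ a - c)) := by
  have hne : ∀ x ∈ [[a, b]], σ * (γ x - c) ≠ 0 := fun x hx => slitPlane_ne_zero (hslit x hx)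
  have hγc : Continuous γ := continuous_iff_continuousAt.2 fun x => (hγ x).continuousAt
  have hint : ContinuousOn (fun x => v * (γ x - c)⁻¹) [[a, b]] :=
    continuousOn_const.mul ((hγc.continuousOn.sub continuousOn_const).inv₀
      fun x hx h => hne x hx (by simp [show γ x - c = 0 from h]))
  refine integral_eq_sub_of_hasDerivAt (f := fun x => log (σ * (γ x - c)))
    (fun x hx => ?_) hint.intervalIntegrable
  have := (((hγ x).sub_const c).const_mul σ).clog_real (hslit x hx)
  rwa [mul_div_mul_left _ _ (left_ne_zero_of_mul (hne x hx)), div_eq_mul_inv] at this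

theorem Complex.log_neg_of_im_neg {x : ℂ} (hx : x.im < 0) : log (-x) = log x + π * I := by
  rw [log, log, norm_neg, arg_neg_eq_arg_add_pi_of_im_neg hx]
  push_cast
  ring

theorem Complex.log_neg_of_im_pos {x : ℂ} (hx : 0 < x.im) : log (-x) = log x - π * I := by
  rw [log, log, norm_neg, arg_neg_eq_arg_sub_pi_of_im_pos hx]
  push_cast
  ring

theorem rectIntegral_inv_sub {z w c : ℂ} (hre : c.re ∈ Ioo z.re w.re)
    (him : c.im ∈ Ioo z.im w.im) : rectIntegral (fun u => (u - c)⁻¹) z w = 2 * π * I := by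
  obtain ⟨hre₁, hre₂⟩ := hre
  obtain ⟨him₁, him₂⟩ := him
  have horiz (y x : ℝ) : HasDerivAt (fun t : ℝ => (t : ℂ) + y * I) 1 x :=
    (hasDerivAt_id x).ofReal_comp.add_const _
  have vert (x y : ℝ) : HasDerivAt (fun t : ℝ => x + (t : ℂ) * I) I y := by
    simpa using ((hasDerivAt_id y).ofReal_comp.mul_const I).const_add (x : ℂ)
  have bottom := integral_mul_inv_sub_eq_log (horiz z.im) (σ := 1) (c := c) (a := z.re)
    (b := w.re) fun x _ => by simp [mem_slitPlane_iff, sub_eq_zero, him₁.ne]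
  have top := integral_mul_inv_sub_eq_log (horiz w.im) (σ := 1) (c := c) (a := z.re)
    (b := w.re) fun x _ => by simp [mem_slitPlane_iff, sub_eq_zero, him₂.ne']
  have right := integral_mul_inv_sub_eq_log (vert w.re) (σ := 1) (c := c) (a := z.im)
    (b := w.im) fun x _ => by simp [mem_slitPlane_iff, hre₂]
  -- The left edge crosses the branch cut of `log`, so it is integrated with `log (-·)`, which
  -- differs from `log` by `+π i` at its lower end and by `-π i` at its upper end.
  have left := integral_mul_inv_sub_eq_log (vert z.re) (σ := -1) (c := c) (a := z.im)
    (b := w.im) fun x _ => by simp [mem_slitPlane_iff, hre₁]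
  simp only [one_mul, neg_one_mul, integral_const_mul] at bottom top right left
  simp only [rectIntegral, smul_eq_mul, bottom, top, right, left]
  rw [log_neg_of_im_neg (x := z.re + z.im * I - c) (by simpa using him₁),
    log_neg_of_im_pos (x := z.re + w.im * I - c) (by simpa using him₂)]
  ring

theorem rectIntegral_mul_inv_sub {f : ℂ → ℂ} {z w c : ℂ}
    (hf : DifferentiableOn ℂ f ([[z.re, w.re]] ×ℂ [[z.im, w.im]]))
    (hre : c.re ∈ Ioo z.re w.re) (him : c.im ∈ Ioo z.im w.im) :
    rectIntegral (fun u => f u * (u - c)⁻¹) z w = 2 * π * I * f c := by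
  set R := [[z.re, w.re]] ×ℂ [[z.im, w.im]]
  have hR : R ∈ 𝓝 c := Filter.mem_of_superset
    ((isOpen_Ioo.reProdIm isOpen_Ioo).mem_nhds ⟨hre, him⟩)
    (reProdIm_subset_iff.2 (prod_mono (Ioo_subset_Icc_self.trans Icc_subset_uIcc)
      (Ioo_subset_Icc_self.trans Icc_subset_uIcc)))
  have hd : DifferentiableOn ℂ (dslope f c) R := (differentiableOn_dslope hR).2 hf
  have edge {γ : ℝ → ℂ} {a b : ℝ} (hγ : Continuous γ) (hγR : ∀ x ∈ [[a, b]], γ x ∈ R)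
      (hγc : ∀ x, γ x ≠ c) : ∫ x in a..b, f (γ x) * (γ x - c)⁻¹ =
        (∫ x in a..b, dslope f c (γ x)) + f c * ∫ x in a..b, (γ x - c)⁻¹ := by
    have hinv : Continuous fun x => (γ x - c)⁻¹ :=
      (hγ.sub continuous_const).inv₀ fun x => sub_ne_zero.2 (hγc x)
    have h₁ : IntervalIntegrable (fun x => dslope f c (γ x)) MeasureTheory.volume a b :=
      (hd.continuousOn.comp hγ.continuousOn hγR).intervalIntegrable
    have h₂ : IntervalIntegrable (fun x => f c * (γ x - c)⁻¹) MeasureTheory.volume a b :=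
      (continuous_const.mul hinv).intervalIntegrable _ _
    rw [← integral_const_mul, ← integral_add h₁ h₂]
    refine integral_congr fun x _ => ?_
    have := sub_ne_zero.2 (hγc x)
    simp only [dslope_of_ne f (hγc x), slope_def_field]
    field_simp
    ring
  have e₁ := edge (a := z.re) (b := w.re) (γ := fun x : ℝ => x + z.im * I) (by fun_prop)
    (fun x hx => by simp [R, mem_reProdIm, hx])
    (fun x h => him.1.ne (by simpa using congrArg im h))
  have e₂ := edge (a := z.re) (b := w.re) (γ := fun x : ℝ => x + w.im * I) (by fun_prop)
    (fun x hx => by simp [R, mem_reProdIm, hx])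
    (fun x h => him.2.ne' (by simpa using congrArg im h))
  have e₃ := edge (a := z.im) (b := w.im) (γ := fun y : ℝ => w.re + y * I) (by fun_prop)
    (fun y hy => by simp [R, mem_reProdIm, hy])
    (fun y h => hre.2.ne' (by simpa using congrArg re h))
  have e₄ := edge (a := z.im) (b := w.im) (γ := fun y : ℝ => z.re + y * I) (by fun_prop)
    (fun y hy => by simp [R, mem_reProdIm, hy])
    (fun y h => hre.1.ne (by simpa using congrArg re h))
  have goursat := rectIntegral_eq_zero hd
  have winding := rectIntegral_inv_sub hre him
  simp only [rectIntegral, smul_eq_mul] at goursat winding ⊢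
  rw [e₁, e₂, e₃, e₄]
  linear_combination goursat + f c * winding

theorem exists_pos_forall_le_norm_sub {γ : ℝ → ℂ} {a b : ℝ} {z₀ : ℂ} (hγ : Continuous γ)
    (hz₀ : ∀ t ∈ [[a, b]], γ t ≠ z₀) :
    ∃ δ > 0, ∀ t ∈ [[a, b]], ∀ z ∈ ball z₀ δ, δ ≤ ‖γ t - z‖ := by
  obtain ⟨t₀, ht₀, hmin⟩ := isCompact_uIcc.exists_isMinOn nonempty_uIcc
    (hγ.sub continuous_const).norm.continuousOn
  have hpos : 0 < ‖γ t₀ - z₀‖ := norm_pos_iff.2 (sub_ne_zero.2 (hz₀ t₀ ht₀))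
  refine ⟨‖γ t₀ - z₀‖ / 2, by positivity, fun t ht z hz => ?_⟩
  have h₁ : ‖γ t₀ - z₀‖ ≤ ‖γ t - z₀‖ := hmin ht
  have h₂ : ‖γ t - z₀‖ ≤ ‖γ t - z‖ + ‖z - z₀‖ := norm_sub_le_norm_sub_add_norm_sub _ _ _
  have h₃ : ‖z - z₀‖ < ‖γ t₀ - z₀‖ / 2 := by rwa [← dist_eq_norm]
  linarith

open MeasureTheory in
theorem differentiableAt_integral_mul_inv_sub {f : ℂ → ℂ} {γ : ℝ → ℂ} {a b : ℝ} {z₀ : ℂ}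
    (hγ : Continuous γ) (hf : ContinuousOn (fun t => f (γ t)) [[a, b]])
    (hz₀ : ∀ t ∈ [[a, b]], γ t ≠ z₀) :
    DifferentiableAt ℂ (fun z => ∫ t in a..b, f (γ t) * (γ t - z)⁻¹) z₀ := by
  obtain ⟨C, hC⟩ := isCompact_uIcc.exists_bound_of_continuousOn hf
  obtain ⟨δ, hδ, hfar⟩ := exists_pos_forall_le_norm_sub hγ hz₀
  have hne : ∀ t ∈ [[a, b]], ∀ z ∈ ball z₀ δ, γ t - z ≠ 0 := fun t ht z hz h => by
    have := hfar t ht z hz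
    rw [h, norm_zero] at this
    linarith
  have hcont (n : ℕ) : ∀ z ∈ ball z₀ δ,
      ContinuousOn (fun t => f (γ t) * ((γ t - z) ^ n)⁻¹) [[a, b]] := fun z hz =>
    hf.mul (((hγ.continuousOn.sub continuousOn_const).pow n).inv₀
      fun t ht => pow_ne_zero n (hne t ht z hz))
  have hmeas (n : ℕ) (z) (hz : z ∈ ball z₀ δ) :
      AEStronglyMeasurable (fun t => f (γ t) * ((γ t - z) ^ n)⁻¹) (volume.restrict (Ι a b)) :=
    ((hcont n z hz).mono uIoc_subset_uIcc).aestronglyMeasurable measurableSet_uIoc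
  have key := hasDerivAt_integral_of_dominated_loc_of_deriv_le (μ := volume)
    (F := fun z t => f (γ t) * (γ t - z)⁻¹) (F' := fun z t => f (γ t) * ((γ t - z) ^ 2)⁻¹)
    (bound := fun _ => C / δ ^ 2) (ball_mem_nhds z₀ hδ)
    (Filter.eventually_of_mem (ball_mem_nhds z₀ hδ) fun z hz => by simpa using hmeas 1 z hz)
    (by simpa using (hcont 1 z₀ (mem_ball_self hδ)).intervalIntegrable)
    (hmeas 2 z₀ (mem_ball_self hδ))
    (Filter.Eventually.of_forall fun t ht z hz => ?_) intervalIntegrable_const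
    (Filter.Eventually.of_forall fun t ht z hz => ?_)
  · exact key.2.differentiableAt
  · have ht' := uIoc_subset_uIcc ht
    rw [norm_mul, norm_inv, norm_pow, ← div_eq_mul_inv]
    exact div_le_div₀ ((norm_nonneg _).trans (hC t ht')) (hC t ht') (by positivity)
      (pow_le_pow_left₀ hδ.le (hfar t ht' z hz) 2)
  · have h := ((hasDerivAt_inv (hne t (uIoc_subset_uIcc ht) z hz)).comp z
      ((hasDerivAt_id z).const_sub (γ t))).const_mul (f (γ t))
    rwa [neg_mul_neg, mul_one] at h

theorem norm_integral_mul_inv_sub_le {f : ℂ → ℂ} {γ : ℝ → ℂ} {a b M d : ℝ} {z : ℂ}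
    (hd : 0 < d) (hM : ∀ t ∈ [[a, b]], ‖f (γ t)‖ ≤ M) (hdist : ∀ t ∈ [[a, b]], d ≤ ‖γ t - z‖) :
    ‖∫ t in a..b, f (γ t) * (γ t - z)⁻¹‖ ≤ M / d * |b - a| := by
  refine norm_integral_le_of_norm_le_const fun t ht => ?_
  have ht' := uIoc_subset_uIcc ht
  rw [norm_mul, norm_inv, ← div_eq_mul_inv]
  exact div_le_div₀ ((norm_nonneg _).trans (hM t ht')) (hM t ht') hd (hdist t ht')

theorem Finset.sum_indicator_sub_eq {α β : Type*} [AddCommGroup α] [AddCommMonoid β]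
    (T : Finset α) (v : α) (G : α → β) :
    ∑ p ∈ T, (T : Set α).indicator (fun _ => G p) (p - v) =
      ∑ p ∈ T, (T : Set α).indicator (fun _ => G (p + v)) (p + v) := by
  classical
  simp only [indicator_apply, Finset.mem_coe]
  rw [← Finset.sum_filter, ← Finset.sum_filter]
  refine Finset.sum_nbij' (· - v) (· + v) ?_ ?_ ?_ ?_ ?_ <;> simp +contextual

theorem ContinuousAt.eq_of_eqOn_of_mem_closure {X Y : Type*} [TopologicalSpace X]
    [TopologicalSpace Y] [T2Space Y] {φ ψ : X → Y} {S : Set X} {x : X} (hφ : ContinuousAt φ x)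
    (hψ : ContinuousAt ψ x) (h : EqOn φ ψ S) (hx : x ∈ closure S) : φ x = ψ x := by
  have : (𝓝[S] x).NeBot := mem_closure_iff_nhdsWithin_neBot.1 hx
  exact tendsto_nhds_unique (hφ.tendsto.mono_left nhdsWithin_le_nhds)
    ((hψ.tendsto.mono_left nhdsWithin_le_nhds).congr'
      (Filter.eventuallyEq_of_mem self_mem_nhdsWithin h).symm)

theorem DifferentiableOn.piecewise_union {𝕜 E F : Type*} [NontriviallyNormedField 𝕜]
    [NormedAddCommGroup E] [NormedSpace 𝕜 E] [NormedAddCommGroup F] [NormedSpace 𝕜 F]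
    {A B : Set E} [∀ x, Decidable (x ∈ A)] {φ ψ : E → F} (hA : IsOpen A) (hB : IsOpen B)
    (hφ : DifferentiableOn 𝕜 φ A) (hψ : DifferentiableOn 𝕜 ψ B) (h : EqOn φ ψ (A ∩ B)) :
    DifferentiableOn 𝕜 (A.piecewise φ ψ) (A ∪ B) := by
  rintro x (hx | hx)
  · refine ((hφ.differentiableAt (hA.mem_nhds hx)).congr_of_eventuallyEq ?_).differentiableWithinAt
    filter_upwards [hA.mem_nhds hx] with y hy using piecewise_eq_of_mem _ _ _ hy
  · refine ((hψ.differentiableAt (hB.mem_nhds hx)).congr_of_eventuallyEq ?_).differentiableWithinAt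
    filter_upwards [hB.mem_nhds hx] with y hy
    by_cases hyA : y ∈ A
    · rw [piecewise_eq_of_mem _ _ _ hyA, h ⟨hyA, hy⟩]
    · exact piecewise_eq_of_notMem _ _ _ hyA

namespace SquareGrid

def square (s : ℝ) (p : ℤ × ℤ) : Set ℂ :=
  [[s * p.1, s * (p.1 + 1)]] ×ℂ [[s * p.2, s * (p.2 + 1)]]

def openSquare (s : ℝ) (p : ℤ × ℤ) : Set ℂ :=
  Ioo (s * p.1) (s * (p.1 + 1)) ×ℂ Ioo (s * p.2) (s * (p.2 + 1))

def hEdge (s : ℝ) (m n : ℤ) : Set ℂ := [[s * m, s * (m + 1)]] ×ℂ {s * n}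

def vEdge (s : ℝ) (m n : ℤ) : Set ℂ := {s * m} ×ℂ [[s * n, s * (n + 1)]]

def hEdgeIntegral (s : ℝ) (φ : ℂ → ℂ) (m n : ℤ) : ℂ :=
  ∫ x : ℝ in s * m..s * (m + 1), φ (x + (s * n : ℝ) * I)

def vEdgeIntegral (s : ℝ) (φ : ℂ → ℂ) (m n : ℤ) : ℂ :=
  I • ∫ y : ℝ in s * n..s * (n + 1), φ ((s * m : ℝ) + y * I)

def squareIntegral (s : ℝ) (φ : ℂ → ℂ) (p : ℤ × ℤ) : ℂ :=
  hEdgeIntegral s φ p.1 p.2 - hEdgeIntegral s φ p.1 (p.2 + 1) +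
    vEdgeIntegral s φ (p.1 + 1) p.2 - vEdgeIntegral s φ p.1 p.2

/-- The part of `∑ p ∈ T, squareIntegral s φ p` carried by the edges across which a square of
`T` borders a square of `S`. -/
def edgeSum (s : ℝ) (S : Set (ℤ × ℤ)) (φ : ℂ → ℂ) (T : Finset (ℤ × ℤ)) : ℂ :=
  ∑ p ∈ T, (S.indicator (fun _ => hEdgeIntegral s φ p.1 p.2) (p.1, p.2 - 1)
    - S.indicator (fun _ => hEdgeIntegral s φ p.1 (p.2 + 1)) (p.1, p.2 + 1)
    + S.indicator (fun _ => vEdgeIntegral s φ (p.1 + 1) p.2) (p.1 + 1, p.2)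
    - S.indicator (fun _ => vEdgeIntegral s φ p.1 p.2) (p.1 - 1, p.2))

def cauchyEdgeSum (s : ℝ) (S : Set (ℤ × ℤ)) (f : ℂ → ℂ) (T : Finset (ℤ × ℤ)) (z : ℂ) : ℂ :=
  (2 * π * I)⁻¹ * edgeSum s S (fun w => f w * (w - z)⁻¹) T

def nearSquares (s t : ℝ) (E : Set ℂ) : Set (ℤ × ℤ) := {p | ∃ w ∈ square s p, infDist w E ≤ t}

variable {s : ℝ} {m n : ℤ} {p : ℤ × ℤ} {z w : ℂ}

theorem squareIntegral_eq_rectIntegral (φ : ℂ → ℂ) (p : ℤ × ℤ) :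
    squareIntegral s φ p = rectIntegral φ ⟨s * p.1, s * p.2⟩ ⟨s * (p.1 + 1), s * (p.2 + 1)⟩ := by
  simp only [squareIntegral, hEdgeIntegral, vEdgeIntegral, rectIntegral]
  push_cast
  rfl

theorem hEdge_subset_square {k : ℤ} (h : n = k ∨ n = k + 1) : hEdge s m n ⊆ square s (m, k) := by
  refine reProdIm_subset_iff.2 (prod_mono subset_rfl (singleton_subset_iff.2 ?_))
  rcases h with rfl | rfl
  · exact left_mem_uIcc
  · exact_mod_cast right_mem_uIcc

theorem vEdge_subset_square {k : ℤ} (h : m = k ∨ m = k + 1) : vEdge s m n ⊆ square s (k, n) := by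
  refine reProdIm_subset_iff.2 (prod_mono (singleton_subset_iff.2 ?_) subset_rfl)
  rcases h with rfl | rfl
  · exact left_mem_uIcc
  · exact_mod_cast right_mem_uIcc

theorem mem_hEdge {x : ℝ} (hx : x ∈ [[s * m, s * (m + 1)]]) :
    (x : ℂ) + (s * n : ℝ) * I ∈ hEdge s m n := by
  simp [hEdge, mem_reProdIm, hx]

theorem mem_vEdge {y : ℝ} (hy : y ∈ [[s * n, s * (n + 1)]]) :
    ((s * m : ℝ) : ℂ) + y * I ∈ vEdge s m n := by
  simp [vEdge, mem_reProdIm, hy]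

theorem eq_of_mem_Ioo_of_mem_uIcc (hs : 0 < s) {a b : ℤ} {x : ℝ}
    (ha : x ∈ Ioo (s * a) (s * (a + 1))) (hb : x ∈ [[s * b, s * (b + 1)]]) : a = b := by
  rw [uIcc_of_le (by nlinarith)] at hb
  have h₁ : a < b + 1 := by
    exact_mod_cast (lt_of_mul_lt_mul_left (ha.1.trans_le hb.2) hs.le : (a : ℝ) < b + 1)
  have h₂ : b < a + 1 := by
    exact_mod_cast (lt_of_mul_lt_mul_left (hb.1.trans_lt ha.2) hs.le : (b : ℝ) < a + 1)
  omega

theorem eq_of_mem_openSquare_of_mem_square (hs : 0 < s) {q : ℤ × ℤ} (hp : z ∈ openSquare s p)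
    (hq : z ∈ square s q) : p = q :=
  Prod.ext (eq_of_mem_Ioo_of_mem_uIcc hs hp.1 hq.1) (eq_of_mem_Ioo_of_mem_uIcc hs hp.2 hq.2)

theorem square_subset_closure_openSquare (hs : 0 < s) (p : ℤ × ℤ) :
    square s p ⊆ closure (openSquare s p) := by
  have h (a : ℤ) : s * a < s * (a + 1) := by nlinarith
  rw [openSquare, closure_reProdIm, closure_Ioo (h p.1).ne, closure_Ioo (h p.2).ne, square,
    uIcc_of_le (h p.1).le, uIcc_of_le (h p.2).le]

theorem mem_uIcc_floor (hs : 0 < s) (x : ℝ) : x ∈ [[s * ⌊x / s⌋, s * (⌊x / s⌋ + 1)]] := by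
  rw [uIcc_of_le (by nlinarith)]
  exact ⟨(le_div_iff₀' hs).1 (Int.floor_le _), (div_le_iff₀' hs).1 (Int.lt_floor_add_one _).le⟩

theorem mem_square_floor (hs : 0 < s) (z : ℂ) : z ∈ square s (⌊z.re / s⌋, ⌊z.im / s⌋) :=
  ⟨mem_uIcc_floor hs z.re, mem_uIcc_floor hs z.im⟩

theorem dist_le_of_mem_square (hz : z ∈ square s p) (hw : w ∈ square s p) :
    dist z w ≤ 2 * |s| := by
  have side (a : ℤ) {x y : ℝ} (hx : x ∈ [[s * a, s * (a + 1)]])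
      (hy : y ∈ [[s * a, s * (a + 1)]]) : |x - y| ≤ |s| := by
    simpa [abs_sub_comm, ← mul_sub] using abs_sub_le_of_uIcc_subset_uIcc (uIcc_subset_uIcc hx hy)
  rw [dist_eq_norm]
  calc ‖z - w‖ ≤ |(z - w).re| + |(z - w).im| := norm_le_abs_re_add_abs_im _
    _ ≤ |s| + |s| := add_le_add (side p.1 hz.1 hw.1) (side p.2 hz.2 hw.2)
    _ = 2 * |s| := by ring

section CauchyFormula

variable {f φ : ℂ → ℂ} {T : Finset (ℤ × ℤ)}

theorem squareIntegral_eq_zero (hφ : DifferentiableOn ℂ φ (square s p)) :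
    squareIntegral s φ p = 0 := by
  rw [squareIntegral_eq_rectIntegral]
  exact rectIntegral_eq_zero hφ

theorem squareIntegral_mul_inv_sub (hf : DifferentiableOn ℂ f (square s p))
    (hz : z ∈ openSquare s p) :
    squareIntegral s (fun w => f w * (w - z)⁻¹) p = 2 * π * I * f z := by
  rw [squareIntegral_eq_rectIntegral]
  exact rectIntegral_mul_inv_sub hf hz.1 hz.2

theorem sum_squareIntegral_mul_inv_sub (hs : 0 < s)
    (hf : ∀ p ∈ T, DifferentiableOn ℂ f (square s p)) (hp : p ∈ T) (hz : z ∈ openSquare s p) :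
    ∑ q ∈ T, squareIntegral s (fun w => f w * (w - z)⁻¹) q = 2 * π * I * f z := by
  have hzero (q) (hq : q ∈ T) (hne : q ≠ p) :
      squareIntegral s (fun w => f w * (w - z)⁻¹) q = 0 :=
    squareIntegral_eq_zero <| (hf q hq).mul <| (differentiableOn_id.sub_const z).inv
      fun w hw h => hne (eq_of_mem_openSquare_of_mem_square hs hz (sub_eq_zero.1 h ▸ hw)).symm
  rw [Finset.sum_eq_single_of_mem p hp hzero]
  exact squareIntegral_mul_inv_sub (hf p hp) hz

theorem edgeSum_univ : edgeSum s univ φ T = ∑ p ∈ T, squareIntegral s φ p := by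
  simp [edgeSum, squareIntegral]

theorem edgeSum_union {S S' : Set (ℤ × ℤ)} (h : Disjoint S S') :
    edgeSum s (S ∪ S') φ T = edgeSum s S φ T + edgeSum s S' φ T := by
  simp only [edgeSum, indicator_union_of_disjoint h, ← Finset.sum_add_distrib]
  exact Finset.sum_congr rfl fun _ _ => by ring

theorem edgeSum_self : edgeSum s T φ T = 0 := by
  have hH := T.sum_indicator_sub_eq (0, 1) fun p => hEdgeIntegral s φ p.1 p.2
  have hV := T.sum_indicator_sub_eq (1, 0) fun p => vEdgeIntegral s φ p.1 p.2
  simp only [Prod.sub_def, Prod.add_def, sub_zero, add_zero] at hH hV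
  simp only [edgeSum, Finset.sum_add_distrib, Finset.sum_sub_distrib, hH, ← hV]
  ring

theorem sum_squareIntegral_eq_edgeSum_add {A B : Set (ℤ × ℤ)} (hAB : Disjoint A B)
    (hT : (T : Set (ℤ × ℤ))ᶜ = A ∪ B) :
    ∑ p ∈ T, squareIntegral s φ p = edgeSum s A φ T + edgeSum s B φ T := by
  rw [← edgeSum_univ, ← union_compl_self (T : Set (ℤ × ℤ)),
    edgeSum_union disjoint_compl_right, edgeSum_self, hT, edgeSum_union hAB, zero_add]

theorem cauchyEdgeSum_add_eq (hs : 0 < s) {A B : Set (ℤ × ℤ)} (hAB : Disjoint A B)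
    (hT : (T : Set (ℤ × ℤ))ᶜ = A ∪ B) (hf : ∀ p ∈ T, DifferentiableOn ℂ f (square s p))
    (hp : p ∈ T) (hz : z ∈ openSquare s p) :
    cauchyEdgeSum s A f T z + cauchyEdgeSum s B f T z = f z := by
  rw [cauchyEdgeSum, cauchyEdgeSum, ← mul_add, ← sum_squareIntegral_eq_edgeSum_add hAB hT,
    sum_squareIntegral_mul_inv_sub hs hf hp hz, ← mul_assoc, inv_mul_cancel₀ two_pi_I_ne_zero,
    one_mul]

end CauchyFormula

section Estimates

variable {f : ℂ → ℂ} {T : Finset (ℤ × ℤ)} {S : Set (ℤ × ℤ)} {M d : ℝ}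

theorem differentiableAt_hEdgeIntegral (hf : ContinuousOn f (hEdge s m n))
    (hz : z ∉ hEdge s m n) :
    DifferentiableAt ℂ (fun z => hEdgeIntegral s (fun w => f w * (w - z)⁻¹) m n) z :=
  differentiableAt_integral_mul_inv_sub (by fun_prop)
    (hf.comp (by fun_prop) fun _ hx => mem_hEdge hx) fun _ hx h => hz (h ▸ mem_hEdge hx)

theorem differentiableAt_vEdgeIntegral (hf : ContinuousOn f (vEdge s m n))
    (hz : z ∉ vEdge s m n) :
    DifferentiableAt ℂ (fun z => vEdgeIntegral s (fun w => f w * (w - z)⁻¹) m n) z :=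
  (differentiableAt_integral_mul_inv_sub (z₀ := z)
    (γ := fun y : ℝ => ((s * m : ℝ) : ℂ) + y * I) (by fun_prop)
    (hf.comp (by fun_prop) fun _ hy => mem_vEdge hy)
    fun _ hy h => hz (h ▸ mem_vEdge hy)).const_smul I

theorem norm_hEdgeIntegral_le (hd : 0 < d) (hM : ∀ w ∈ hEdge s m n, ‖f w‖ ≤ M)
    (hdist : ∀ w ∈ hEdge s m n, d ≤ ‖w - z‖) :
    ‖hEdgeIntegral s (fun w => f w * (w - z)⁻¹) m n‖ ≤ M / d * |s| := by
  have := norm_integral_mul_inv_sub_le (γ := fun x : ℝ => x + (s * n : ℝ) * I) (z := z)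
    (a := s * m) (b := s * (m + 1)) hd (fun _ hx => hM _ (mem_hEdge hx))
    fun _ hx => hdist _ (mem_hEdge hx)
  rwa [show s * (m + 1) - s * m = s by ring] at this

theorem norm_vEdgeIntegral_le (hd : 0 < d) (hM : ∀ w ∈ vEdge s m n, ‖f w‖ ≤ M)
    (hdist : ∀ w ∈ vEdge s m n, d ≤ ‖w - z‖) :
    ‖vEdgeIntegral s (fun w => f w * (w - z)⁻¹) m n‖ ≤ M / d * |s| := by
  have := norm_integral_mul_inv_sub_le (γ := fun y : ℝ => (s * m : ℝ) + y * I) (z := z)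
    (a := s * n) (b := s * (n + 1)) hd (fun _ hy => hM _ (mem_vEdge hy))
    fun _ hy => hdist _ (mem_vEdge hy)
  rw [vEdgeIntegral, norm_smul, norm_I, one_mul]
  rwa [show s * (n + 1) - s * n = s by ring] at this

theorem differentiableAt_edgeSum (hf : ∀ p ∈ T, ContinuousOn f (square s p))
    (hz : ∀ q ∈ S, z ∉ square s q) :
    DifferentiableAt ℂ (fun z => edgeSum s S (fun w => f w * (w - z)⁻¹) T) z := by
  have indicator {F : ℂ → ℂ} {q : ℤ × ℤ} (h : q ∈ S → DifferentiableAt ℂ F z) :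
      DifferentiableAt ℂ (fun z => S.indicator (fun _ => F z) q) z := by
    by_cases hq : q ∈ S
    · simpa [indicator_of_mem hq] using h hq
    · simp [indicator_of_notMem hq]
  refine DifferentiableAt.fun_sum fun p hp => ?_
  have hfp := hf p hp
  refine (((indicator fun hq => ?_).sub (indicator fun hq => ?_)).add
    (indicator fun hq => ?_)).sub (indicator fun hq => ?_)
  · exact differentiableAt_hEdgeIntegral (hfp.mono (hEdge_subset_square (by omega)))
      fun h => hz _ hq (hEdge_subset_square (by omega) h)
  · exact differentiableAt_hEdgeIntegral (hfp.mono (hEdge_subset_square (by omega)))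
      fun h => hz _ hq (hEdge_subset_square (by omega) h)
  · exact differentiableAt_vEdgeIntegral (hfp.mono (vEdge_subset_square (by omega)))
      fun h => hz _ hq (vEdge_subset_square (by omega) h)
  · exact differentiableAt_vEdgeIntegral (hfp.mono (vEdge_subset_square (by omega)))
      fun h => hz _ hq (vEdge_subset_square (by omega) h)

theorem norm_edgeSum_le (hd : 0 < d) (hM₀ : 0 ≤ M) (hM : ∀ p ∈ T, ∀ w ∈ square s p, ‖f w‖ ≤ M)
    (hdist : ∀ q ∈ S, ∀ w ∈ square s q, d ≤ ‖w - z‖) :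
    ‖edgeSum s S (fun w => f w * (w - z)⁻¹) T‖ ≤ T.card * (4 * (M / d * |s|)) := by
  set B := M / d * |s|
  have indicator {X : ℂ} {q : ℤ × ℤ} (h : q ∈ S → ‖X‖ ≤ B) :
      ‖S.indicator (fun _ => X) q‖ ≤ B := by
    by_cases hq : q ∈ S
    · simpa [indicator_of_mem hq] using h hq
    · rw [indicator_of_notMem hq, norm_zero]
      exact mul_nonneg (div_nonneg hM₀ hd.le) (abs_nonneg s)
  rw [← nsmul_eq_mul]
  refine (norm_sum_le _ _).trans (Finset.sum_le_card_nsmul _ _ _ fun p hp => ?_)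
  have hMp := hM p hp
  calc _ ≤ B + B + B + B := (norm_sub_le _ _).trans <| add_le_add ((norm_add_le _ _).trans <|
        add_le_add ((norm_sub_le _ _).trans <| add_le_add (indicator fun hq => ?_)
          (indicator fun hq => ?_)) (indicator fun hq => ?_)) (indicator fun hq => ?_)
    _ = 4 * B := by ring
  · exact norm_hEdgeIntegral_le hd (fun w hw => hMp w (hEdge_subset_square (by omega) hw))
      fun w hw => hdist _ hq w (hEdge_subset_square (by omega) hw)
  · exact norm_hEdgeIntegral_le hd (fun w hw => hMp w (hEdge_subset_square (by omega) hw))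
      fun w hw => hdist _ hq w (hEdge_subset_square (by omega) hw)
  · exact norm_vEdgeIntegral_le hd (fun w hw => hMp w (vEdge_subset_square (by omega) hw))
      fun w hw => hdist _ hq w (vEdge_subset_square (by omega) hw)
  · exact norm_vEdgeIntegral_le hd (fun w hw => hMp w (vEdge_subset_square (by omega) hw))
      fun w hw => hdist _ hq w (vEdge_subset_square (by omega) hw)

theorem differentiableAt_cauchyEdgeSum (hf : ∀ p ∈ T, ContinuousOn f (square s p))
    (hz : ∀ q ∈ S, z ∉ square s q) : DifferentiableAt ℂ (cauchyEdgeSum s S f T) z :=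
  (differentiableAt_edgeSum hf hz).const_mul _

theorem exists_bound_cauchyEdgeSum (hd : 0 < d) (hM : ∀ p ∈ T, ∀ w ∈ square s p, ‖f w‖ ≤ M) :
    ∃ C, ∀ z : ℂ, (∀ q ∈ S, ∀ w ∈ square s q, d ≤ ‖w - z‖) →
      ‖cauchyEdgeSum s S f T z‖ ≤ C := by
  refine ⟨‖(2 * π * I)⁻¹‖ * (T.card * (4 * (max M 0 / d * |s|))), fun z hz => ?_⟩
  rw [cauchyEdgeSum, norm_mul]
  gcongr
  exact norm_edgeSum_le hd (le_max_right _ _)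
    (fun p hp w hw => (hM p hp w hw).trans (le_max_left _ _)) hz

end Estimates

section NearSquares

variable {E : Set ℂ} {t : ℝ}

theorem nearSquares_mono {t' : ℝ} (h : t ≤ t') : nearSquares s t E ⊆ nearSquares s t' E :=
  fun _ ⟨w, hw, hwE⟩ => ⟨w, hw, hwE.trans h⟩

theorem infDist_le_add_norm_sub_of_mem_nearSquares (hp : p ∈ nearSquares s t E)
    (hw : w ∈ square s p) : infDist z E ≤ t + 2 * |s| + ‖w - z‖ := by
  obtain ⟨w', hw', hw'E⟩ := hp
  have h₁ := infDist_le_infDist_add_dist (x := z) (y := w) (s := E)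
  have h₂ := infDist_le_infDist_add_dist (x := w) (y := w') (s := E)
  have h₃ := dist_le_of_mem_square hw hw'
  rw [dist_comm, dist_eq_norm] at h₁
  linarith

theorem lt_infDist_add_norm_sub_of_notMem_nearSquares (hp : p ∉ nearSquares s t E)
    (hw : w ∈ square s p) : t < infDist z E + ‖w - z‖ := by
  have h₁ : t < infDist w E := not_le.1 fun h => hp ⟨w, hw, h⟩
  have h₂ := infDist_le_infDist_add_dist (x := w) (y := z) (s := E)
  rw [dist_eq_norm] at h₂
  linarith

theorem notMem_square_of_infDist_lt (hz : infDist z E < t) (hp : p ∉ nearSquares s t E) :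
    z ∉ square s p := fun h => by
  have := lt_infDist_add_norm_sub_of_notMem_nearSquares hp h (z := z)
  rw [sub_self, norm_zero, add_zero] at this
  exact hz.not_gt this

theorem notMem_square_of_lt_infDist (hz : t + 2 * |s| < infDist z E)
    (hp : p ∈ nearSquares s t E) : z ∉ square s p := fun h => by
  simpa using hz.trans_le (infDist_le_add_norm_sub_of_mem_nearSquares hp h (z := z))

theorem mem_Icc_of_mem_uIcc (hs : 0 < s) {a : ℤ} {x R : ℝ} (hx : x ∈ [[s * a, s * (a + 1)]])
    (hR : |x| ≤ R) : a ∈ Icc (-⌈R / s⌉ - 1) ⌈R / s⌉ := by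
  rw [uIcc_of_le (by nlinarith)] at hx
  obtain ⟨hR₁, hR₂⟩ := abs_le.1 hR
  have h₁ : (a : ℝ) ≤ R / s := (le_div_iff₀' hs).2 (hx.1.trans hR₂)
  have h₂ : -(a + 1 : ℝ) ≤ R / s := (le_div_iff₀' hs).2 (by nlinarith [hx.2])
  constructor
  · have := Int.le_ceil_iff.2 (show ((-a - 1 : ℤ) : ℝ) - 1 < R / s by push_cast; linarith)
    omega
  · exact Int.le_ceil_iff.2 (by linarith)

theorem finite_nearSquares (hs : 0 < s) (hE : Bornology.IsBounded E) (hne : E.Nonempty) :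
    (nearSquares s t E).Finite := by
  obtain ⟨R, hR⟩ := hE.subset_closedBall 0
  have hN := finite_Icc (-⌈(R + t + 1) / s⌉ - 1) ⌈(R + t + 1) / s⌉
  refine (hN.prod hN).subset fun p ⟨w, hw, hwE⟩ => ?_
  obtain ⟨e, he, hwe⟩ := (infDist_lt_iff hne).1 (hwE.trans_lt (lt_add_one t))
  have hwR : ‖w‖ ≤ R + t + 1 := calc
    ‖w‖ ≤ ‖e‖ + ‖w - e‖ := norm_le_norm_add_norm_sub' w e
    _ ≤ R + (t + 1) := add_le_add (mem_closedBall_zero_iff.1 (hR he)) (dist_eq_norm w e ▸ hwe.le)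
    _ = R + t + 1 := by ring
  exact ⟨mem_Icc_of_mem_uIcc hs hw.1 ((abs_re_le_norm w).trans hwR),
    mem_Icc_of_mem_uIcc hs hw.2 ((abs_im_le_norm w).trans hwR)⟩

theorem cauchyEdgeSum_nearSquares_add_eq (hs : 0 < s) {f : ℂ → ℂ} {T : Finset (ℤ × ℤ)}
    {t₁ t₂ : ℝ} (h₁₂ : t₁ ≤ t₂) (hT : (T : Set (ℤ × ℤ)) = nearSquares s t₂ E \ nearSquares s t₁ E)
    (hf : ∀ p ∈ T, DifferentiableOn ℂ f (square s p)) (hfz : ContinuousAt f z)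
    (hz₁ : t₁ + 2 * |s| < infDist z E) (hz₂ : infDist z E < t₂) :
    cauchyEdgeSum s (nearSquares s t₂ E)ᶜ f T z + cauchyEdgeSum s (nearSquares s t₁ E) f T z =
      f z := by
  have hp := mem_square_floor hs z
  have hpT : (⌊z.re / s⌋, ⌊z.im / s⌋) ∈ T := by
    rw [← Finset.mem_coe, hT]
    exact ⟨⟨z, hp, hz₂.le⟩, fun h => notMem_square_of_lt_infDist hz₁ h hp⟩
  have hfc p (hp : p ∈ T) := (hf p hp).continuousOn
  have hg := differentiableAt_cauchyEdgeSum (S := (nearSquares s t₂ E)ᶜ) hfc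
    fun q hq => notMem_square_of_infDist_lt hz₂ hq
  have hk := differentiableAt_cauchyEdgeSum hfc fun q hq => notMem_square_of_lt_infDist hz₁ hq
  refine (hg.continuousAt.add hk.continuousAt).eq_of_eqOn_of_mem_closure hfz
    (fun w hw => cauchyEdgeSum_add_eq hs ?_ ?_ hf hpT hw) (square_subset_closure_openSquare hs _ hp)
  · exact disjoint_compl_left.mono_right (nearSquares_mono h₁₂)
  · rw [hT, sdiff_eq, compl_inter, compl_compl]

end NearSquares

end SquareGrid

open SquareGrid in
theorem exists_cauchy_decomposition_on_collar {E : Set ℂ} {f : ℂ → ℂ} {s M : ℝ} (hs : 0 < s)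
    (hE : IsCompact E) (hne : E.Nonempty)
    (hf : DifferentiableOn ℂ f ((infDist · E) ⁻¹' Ioo 0 (9 * s)))
    (hM : ∀ z ∈ (infDist · E) ⁻¹' Ioo 0 (9 * s), ‖f z‖ ≤ M) :
    ∃ g k : ℂ → ℂ, DifferentiableOn ℂ g {z | infDist z E < 5 * s} ∧
      (∃ C, ∀ z, infDist z E < 5 * s → ‖g z‖ ≤ C) ∧
      DifferentiableOn ℂ k {z | 3 * s < infDist z E} ∧
      (∃ C, ∀ z, 5 * s ≤ infDist z E → ‖k z‖ ≤ C) ∧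
      ∀ z, 3 * s < infDist z E → infDist z E < 5 * s → g z + k z = f z := by
  have habs : |s| = s := abs_of_pos hs
  -- Squares have diameter at most `2 s`, so the collar `T` lies between distance `s` and `8 s`
  -- from `E`, its outer boundary beyond `6 s` and its inner boundary within `3 s`.
  obtain ⟨T, hT⟩ := ((finite_nearSquares (t := 6 * s) hs hE.isBounded hne).sdiff
    (t := nearSquares s s E)).exists_finset_coe
  have hTf : ∀ p ∈ T, square s p ⊆ (infDist · E) ⁻¹' Ioo 0 (9 * s) := fun p hp w hw => by
    rw [← Finset.mem_coe, hT] at hp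
    have h₁ := infDist_le_add_norm_sub_of_mem_nearSquares hp.1 hw (z := w)
    have h₂ := lt_infDist_add_norm_sub_of_notMem_nearSquares hp.2 hw (z := w)
    simp only [sub_self, norm_zero, add_zero, habs] at h₁ h₂
    exact ⟨by linarith, by linarith⟩
  have hfT : ∀ p ∈ T, DifferentiableOn ℂ f (square s p) := fun p hp => hf.mono (hTf p hp)
  have hfc : ∀ p ∈ T, ContinuousOn f (square s p) := fun p hp => (hfT p hp).continuousOn
  have hMT : ∀ p ∈ T, ∀ w ∈ square s p, ‖f w‖ ≤ M := fun p hp w hw => hM w (hTf p hp hw)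
  obtain ⟨Cg, hCg⟩ := exists_bound_cauchyEdgeSum (S := (nearSquares s (6 * s) E)ᶜ) hs hMT
  obtain ⟨Ck, hCk⟩ := exists_bound_cauchyEdgeSum (S := nearSquares s s E) hs hMT
  refine ⟨cauchyEdgeSum s (nearSquares s (6 * s) E)ᶜ f T, cauchyEdgeSum s (nearSquares s s E) f T,
    fun z hz => ?_, ⟨Cg, fun z hz => hCg z fun q hq w hw => ?_⟩, fun z hz => ?_,
    ⟨Ck, fun z hz => hCk z fun q hq w hw => ?_⟩, fun z hz₁ hz₂ => ?_⟩
  · exact (differentiableAt_cauchyEdgeSum hfc fun q hq => notMem_square_of_infDist_lt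
      (hz.trans (by linarith : 5 * s < 6 * s)) hq).differentiableWithinAt
  · have := lt_infDist_add_norm_sub_of_notMem_nearSquares hq hw (z := z)
    linarith
  · have hz : 3 * s < infDist z E := hz
    exact (differentiableAt_cauchyEdgeSum hfc fun q hq => notMem_square_of_lt_infDist
      (by rw [habs]; linarith) hq).differentiableWithinAt
  · have := infDist_le_add_norm_sub_of_mem_nearSquares hq hw (z := z)
    rw [habs] at this
    linarith
  · have hzf : (infDist · E) ⁻¹' Ioo 0 (9 * s) ∈ 𝓝 z :=
      (isOpen_Ioo.preimage (continuous_infDist_pt E)).mem_nhds ⟨by linarith, by linarith⟩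
    exact cauchyEdgeSum_nearSquares_add_eq hs (by linarith) hT hfT
      (hf.differentiableAt hzf).continuousAt (by rw [habs]; linarith) (by linarith)

theorem exists_cauchy_decomposition {E U : Set ℂ} {f : ℂ → ℂ} {M : ℝ} (hE : IsCompact E)
    (hU : IsOpen U) (hEU : E ⊆ U) (hf : DifferentiableOn ℂ f (U \ E))
    (hM : ∀ z ∈ U \ E, ‖f z‖ ≤ M) :
    ∃ W : Set ℂ, ∃ g k : ℂ → ℂ, IsOpen W ∧ E ⊆ W ∧ W ⊆ U ∧
      DifferentiableOn ℂ g W ∧ (∃ C, ∀ z ∈ W, ‖g z‖ ≤ C) ∧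
      DifferentiableOn ℂ k Eᶜ ∧ (∃ C, ∀ z ∈ Eᶜ, ‖k z‖ ≤ C) ∧ EqOn f (g + k) (W \ E) := by
  classical
  rcases E.eq_empty_or_nonempty with rfl | hne
  · exact ⟨∅, 0, 0, isOpen_empty, subset_rfl, empty_subset _, differentiableOn_empty,
      ⟨0, by simp⟩, (differentiable_const 0).differentiableOn, ⟨0, by simp⟩, by simp⟩
  obtain ⟨δ, hδ, hδU⟩ := hE.exists_thickening_subset_open hU hEU
  obtain ⟨s, hs, rfl⟩ : ∃ s, 0 < s ∧ 9 * s = δ := ⟨δ / 9, by positivity, by ring⟩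
  have hU' : ∀ z, infDist z E < 9 * s → z ∈ U := fun z hz =>
    hδU ((mem_thickening_iff_infDist_lt hne).2 hz)
  have hR : (infDist · E) ⁻¹' Ioo 0 (9 * s) ⊆ U \ E := fun z hz =>
    ⟨hU' z hz.2, fun hzE => hz.1.ne' (infDist_zero_of_mem hzE)⟩
  obtain ⟨g, k, hgd, ⟨Cg, hCg⟩, hkd, ⟨Ck, hCk⟩, hgk⟩ :=
    exists_cauchy_decomposition_on_collar hs hE hne (hf.mono hR) fun z hz => hM z (hR hz)
  set W := {z | infDist z E < 5 * s}
  have hW : IsOpen W := isOpen_lt (continuous_infDist_pt E) continuous_const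
  have hWU : W ⊆ U := fun z hz => hU' z (by linarith [show infDist z E < 5 * s from hz])
  refine ⟨W, g, (W \ E).piecewise (f - g) k, hW, fun z hz => ?_, hWU, hgd, ⟨Cg, hCg⟩, ?_,
    ⟨max (M + Cg) Ck, fun z hz => ?_⟩, fun z hz => ?_⟩
  · show infDist z E < 5 * s
    rw [infDist_zero_of_mem hz]
    positivity
  · refine (DifferentiableOn.piecewise_union (hW.sdiff hE.isClosed)
      (isOpen_lt continuous_const (continuous_infDist_pt E))
      ((hf.mono (sdiff_subset_sdiff_left hWU)).sub (hgd.mono sdiff_subset)) hkd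
      fun z hz => (eq_sub_of_add_eq' (hgk z hz.2 hz.1.1)).symm).mono fun z hz => ?_
    by_cases h : infDist z E < 5 * s
    · exact Or.inl ⟨h, hz⟩
    · exact Or.inr (show 3 * s < infDist z E by linarith)
  · by_cases h : z ∈ W \ E
    · rw [piecewise_eq_of_mem _ _ _ h]
      exact (norm_sub_le _ _).trans ((add_le_add (hM z ⟨hWU h.1, hz⟩) (hCg z h.1)).trans
        (le_max_left _ _))
    · rw [piecewise_eq_of_notMem _ _ _ h]
      exact (hCk z (not_lt.1 fun h' => h ⟨h', hz⟩)).trans (le_max_right _ _)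
  · simp [piecewise_eq_of_mem _ _ _ hz]

end

theorem hInftyRemovable_of_forall_extension {E : Set ℂ}
    (h : ∀ U : Set ℂ, IsOpen U → E ⊆ U →
      ∀ f : ℂ → ℂ, DifferentiableOn ℂ f (U \ E) → (∃ M : ℝ, ∀ z ∈ U \ E, ‖f z‖ ≤ M) →
        ∃ g : ℂ → ℂ, DifferentiableOn ℂ g U ∧ (∃ M : ℝ, ∀ z ∈ U, ‖g z‖ ≤ M) ∧
          ∀ z ∈ U \ E, g z = f z) :
    HInftyRemovable E := by
  intro f hf hfb z hz w hw
  rw [compl_eq_univ_sdiff] at hf hfb hz hw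
  obtain ⟨g, hg, ⟨C, hC⟩, hgf⟩ := h univ isOpen_univ (subset_univ E) f hf hfb
  have hbdd : Bornology.IsBounded (range g) :=
    isBounded_iff_forall_norm_le.2 ⟨C, forall_mem_range.2 fun z => hC z trivial⟩
  rw [← hgf z hz, ← hgf w hw]
  exact (differentiableOn_univ.1 hg).apply_eq_apply_of_bounded hbdd z w

theorem HInftyRemovable.exists_extension {E U : Set ℂ} (hrem : HInftyRemovable E)
    (hE : IsCompact E) (hU : IsOpen U) (hEU : E ⊆ U) {f : ℂ → ℂ}
    (hf : DifferentiableOn ℂ f (U \ E)) {M : ℝ} (hM : ∀ z ∈ U \ E, ‖f z‖ ≤ M) :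
    ∃ g : ℂ → ℂ, DifferentiableOn ℂ g U ∧ (∃ M : ℝ, ∀ z ∈ U, ‖g z‖ ≤ M) ∧
      ∀ z ∈ U \ E, g z = f z := by
  classical
  obtain ⟨W, g, k, hW, hEW, hWU, hgd, ⟨Cg, hCg⟩, hkd, hkb, hfgk⟩ :=
    exists_cauchy_decomposition hE hU hEU hf hM
  obtain ⟨z₀, hz₀⟩ := nonempty_compl.2 hE.ne_univ
  have hk : ∀ z ∈ Eᶜ, k z = k z₀ := fun z hz => hrem k hkd hkb z hz z₀ hz₀
  have hfg : ∀ z ∈ W \ E, f z = g z + k z₀ := fun z hz => by rw [hfgk hz, Pi.add_apply, hk z hz.2]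
  refine ⟨W.piecewise (fun z => g z + k z₀) f, ?_, ⟨max (Cg + ‖k z₀‖) M, fun z hz => ?_⟩,
    fun z hz => ?_⟩
  · refine (DifferentiableOn.piecewise_union hW (hU.sdiff hE.isClosed) (hgd.add_const _) hf
      fun z hz => (hfg z ⟨hz.1, hz.2.2⟩).symm).mono fun z hz => ?_
    by_cases h : z ∈ E
    · exact Or.inl (hEW h)
    · exact Or.inr ⟨hz, h⟩
  · by_cases h : z ∈ W
    · rw [piecewise_eq_of_mem _ _ _ h]
      exact (norm_add_le _ _).trans ((add_le_add (hCg z h) le_rfl).trans (le_max_left _ _))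
    · rw [piecewise_eq_of_notMem _ _ _ h]
      exact (hM z ⟨hz, fun hE' => h (hEW hE')⟩).trans (le_max_right _ _)
  · by_cases h : z ∈ W
    · rw [piecewise_eq_of_mem _ _ _ h, hfg z ⟨h, hz.2⟩]
    · exact piecewise_eq_of_notMem _ _ _ h

/-- `H∞`-removability of a compact set `E` is equivalent to the local extension property:
for every open set `U ⊇ E`, every bounded holomorphic function on `U \ E` extends to a
bounded holomorphic function on `U`. -/
theorem stmt_1 (E : Set ℂ) (hE : IsCompact E) :
    (∀ U : Set ℂ, IsOpen U → E ⊆ U →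
      ∀ f : ℂ → ℂ, DifferentiableOn ℂ f (U \ E) → (∃ M : ℝ, ∀ z ∈ U \ E, ‖f z‖ ≤ M) →
        ∃ g : ℂ → ℂ, DifferentiableOn ℂ g U ∧ (∃ M : ℝ, ∀ z ∈ U, ‖g z‖ ≤ M) ∧
          ∀ z ∈ U \ E, g z = f z)
    ↔ HInftyRemovable E :=
  ⟨hInftyRemovable_of_forall_extension,
    fun hrem _ hU hEU _ hf ⟨_, hM⟩ => hrem.exists_extension hE hU hEU hf hM⟩
end

section
/- (Frostman) Let E ⊆ ℂ be a compact set with Hausdorff dimension dimH(E) > 1. Then E is not H∞-removable: there exists a nonconstant bounded holomorphic function on ℂ \ E. -/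
/-!
Fix `1 < σ < dimH E`, so that the `σ`-dimensional Hausdorff content of `E` is positive. Pushing
this content down the dyadic squares, each square passing its mass to its children in proportion
to their contents, yields Frostman weights: a square of side `ℓ` carries mass `O(ℓ ^ σ)`, hence
the mass within distance `r` of any point is `O(r ^ σ)`. Summing over dyadic shells, the potential
`∫ dμ(ζ) / |z - ζ|` is then bounded independently of `z`, because `σ > 1`. So the Cauchy transform
`f z = ∫ dμ(ζ) / (z - ζ)`, obtained as the limit of the Cauchy transforms of the discretized
measures, is bounded and holomorphic off `E`, and `f z ≈ μ(E) / z` for large `z` shows that it is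
not constant.
-/

open MeasureTheory Set Filter Topology
open scoped ENNReal NNReal Classical

noncomputable section

namespace Frostman

section HausdorffContent

variable {X : Type*} [EMetricSpace X]

/-- The supremum over `A.Nonempty` makes the gauge vanish at `∅` also for `σ = 0`. -/
def hausdorffGauge (σ : ℝ) (A : Set X) : ℝ≥0∞ := ⨆ _ : A.Nonempty, Metric.ediam A ^ σ

lemma hausdorffGauge_empty (σ : ℝ) : hausdorffGauge σ (∅ : Set X) = 0 := by
  simp [hausdorffGauge]

def hausdorffContent (σ : ℝ) : OuterMeasure X :=
  OuterMeasure.ofFunction (hausdorffGauge σ) (hausdorffGauge_empty σ)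

lemma hausdorffContent_le_ediam (σ : ℝ) (A : Set X) :
    hausdorffContent σ A ≤ Metric.ediam A ^ σ :=
  (OuterMeasure.ofFunction_le A).trans (iSup_le fun _ => le_rfl)

lemma hausdorffContent_ne_top {σ : ℝ} (hσ : 0 ≤ σ) {A : Set X} (hA : Metric.ediam A ≠ ⊤) :
    hausdorffContent σ A ≠ ⊤ :=
  ne_top_of_le_ne_top (ENNReal.rpow_ne_top_of_nonneg hσ hA) (hausdorffContent_le_ediam σ A)

/-- A cover whose gauge sum is below `r ^ σ` consists of sets of diameter at most `r`, so it is
admissible in the definition of `μH[σ]` at scale `r`. -/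
lemma hausdorffMeasure_eq_zero_of_hausdorffContent_eq_zero [MeasurableSpace X] [BorelSpace X]
    {σ : ℝ} (hσ : 0 < σ) {A : Set X}
    (h : hausdorffContent σ A = 0) : μH[σ] A = 0 := by
  rw [Measure.hausdorffMeasure_apply]
  simp only [ENNReal.iSup_eq_zero]
  intro r hr
  refine le_antisymm (ENNReal.le_of_forall_pos_le_add fun ε hε _ => ?_) zero_le
  have hpos : hausdorffContent σ A < min (ε : ℝ≥0∞) (r ^ σ) := by
    rw [h]
    exact lt_min (by exact_mod_cast hε) (ENNReal.rpow_pos_of_nonneg hr hσ.le)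
  rw [hausdorffContent, OuterMeasure.ofFunction_apply] at hpos
  obtain ⟨t, ht⟩ := iInf_lt_iff.1 hpos
  obtain ⟨hcover, hsum⟩ := iInf_lt_iff.1 ht
  have hdiam : ∀ n, Metric.ediam (t n) ≤ r := by
    intro n
    rcases (t n).eq_empty_or_nonempty with hempty | hne
    · simp [hempty]
    by_contra! hlt
    have hgauge : Metric.ediam (t n) ^ σ ≤ hausdorffGauge σ (t n) :=
      le_iSup (fun _ : (t n).Nonempty => Metric.ediam (t n) ^ σ) hne
    have := (ENNReal.rpow_le_rpow hlt.le hσ.le).trans (hgauge.trans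
      (ENNReal.le_tsum (f := fun n => hausdorffGauge σ (t n)) n))
    exact (this.trans_lt hsum).not_ge (min_le_right _ _)
  rw [zero_add]
  exact (iInf₂_le_of_le t hcover (iInf_le_of_le hdiam le_rfl)).trans
    (hsum.le.trans (min_le_left _ _))

lemma hausdorffContent_ne_zero_of_lt_dimH [MeasurableSpace X] [BorelSpace X] {σ : ℝ≥0}
    {A : Set X} (hσ : 0 < σ) (h : (σ : ℝ≥0∞) < dimH A) : hausdorffContent σ A ≠ 0 := fun h0 => by
  simpa [hausdorffMeasure_of_lt_dimH h] using
    hausdorffMeasure_eq_zero_of_hausdorffContent_eq_zero (NNReal.coe_pos.2 hσ) h0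

end HausdorffContent

variable {σ R : ℝ} {E : Set ℂ}

section DyadicGrid

def side (R : ℝ) (n : ℕ) : ℝ := 2 * R / 2 ^ n

def dyadicInterval (R : ℝ) (n a : ℕ) : Set ℝ :=
  Ico (-R + a * side R n) (-R + (a + 1) * side R n)

/-- The half-open squares of generation `n` tile `[-R, R)²` for indices in `grid n`. -/
def dyadicSquare (R : ℝ) (n : ℕ) (p : ℕ × ℕ) : Set ℂ :=
  dyadicInterval R n p.1 ×ℂ dyadicInterval R n p.2

def grid (n : ℕ) : Finset (ℕ × ℕ) := Finset.range (2 ^ n) ×ˢ Finset.range (2 ^ n)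

def parent (p : ℕ × ℕ) : ℕ × ℕ := (p.1 / 2, p.2 / 2)

def ancestor (j : ℕ) (p : ℕ × ℕ) : ℕ × ℕ := (p.1 / 2 ^ j, p.2 / 2 ^ j)

def children (q : ℕ × ℕ) : Finset (ℕ × ℕ) :=
  {2 * q.1, 2 * q.1 + 1} ×ˢ {2 * q.2, 2 * q.2 + 1}

lemma side_pos (hR : 0 < R) (n : ℕ) : 0 < side R n := by
  unfold side; positivity

lemma side_succ (R : ℝ) (n : ℕ) : side R (n + 1) = side R n / 2 := by
  simp only [side, pow_succ]; ring

lemma two_mul_side (R : ℝ) (n : ℕ) : 2 * side R n = 4 * R * (1 / 2) ^ n := by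
  simp only [side, one_div_pow]; ring

lemma mem_children {p q : ℕ × ℕ} : p ∈ children q ↔ parent p = q := by
  simp only [children, parent, Finset.mem_product, Finset.mem_insert, Finset.mem_singleton,
    Prod.ext_iff]
  omega

lemma ancestor_succ (j : ℕ) (p : ℕ × ℕ) : ancestor (j + 1) p = ancestor j (parent p) := by
  simp only [ancestor, parent, Nat.div_div_eq_div_mul, pow_succ']

lemma grid_succ (n : ℕ) : grid (n + 1) = (grid n).biUnion children := by
  ext p
  simp only [grid, children, Finset.mem_biUnion, Finset.mem_product, Finset.mem_range,
    Finset.mem_insert, Finset.mem_singleton, pow_succ]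
  constructor
  · rintro ⟨h1, h2⟩
    exact ⟨(p.1 / 2, p.2 / 2), ⟨by omega, by omega⟩, by omega, by omega⟩
  · rintro ⟨q, ⟨hq1, hq2⟩, h1, h2⟩
    omega

lemma sum_grid_succ {M : Type*} [AddCommMonoid M] (n : ℕ) (f : ℕ × ℕ → M) :
    ∑ p ∈ grid (n + 1), f p = ∑ q ∈ grid n, ∑ p ∈ children q, f p := by
  rw [grid_succ, Finset.sum_biUnion]
  intro q _ q' _ hqq'
  refine Finset.disjoint_left.2 fun p hp hp' => hqq' ?_
  rw [← mem_children.1 hp, ← mem_children.1 hp']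

lemma dyadicInterval_eq_union (hR : 0 < R) (n a : ℕ) :
    dyadicInterval R n a =
      dyadicInterval R (n + 1) (2 * a) ∪ dyadicInterval R (n + 1) (2 * a + 1) := by
  have hs := side_pos hR n
  ext t
  simp only [dyadicInterval, side_succ, mem_union, mem_Ico]
  push_cast
  constructor
  · rintro ⟨h1, h2⟩
    by_cases ht : t < -R + (2 * a + 1) * (side R n / 2)
    · left; constructor <;> linarith
    · right; constructor <;> linarith
  · rintro (⟨h1, h2⟩ | ⟨h1, h2⟩) <;> constructor <;> linarith

lemma dyadicInterval_succ_subset (hR : 0 < R) (n b : ℕ) :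
    dyadicInterval R (n + 1) b ⊆ dyadicInterval R n (b / 2) := by
  rcases Nat.even_or_odd' b with ⟨c, rfl | rfl⟩
  · rw [show 2 * c / 2 = c by omega, dyadicInterval_eq_union hR n c]
    exact subset_union_left
  · rw [show (2 * c + 1) / 2 = c by omega, dyadicInterval_eq_union hR n c]
    exact subset_union_right

lemma dyadicSquare_succ_subset (hR : 0 < R) (n : ℕ) (p : ℕ × ℕ) :
    dyadicSquare R (n + 1) p ⊆ dyadicSquare R n (parent p) := fun _ hy =>
  ⟨dyadicInterval_succ_subset hR n p.1 hy.1, dyadicInterval_succ_subset hR n p.2 hy.2⟩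

lemma dyadicSquare_subset_ancestor (hR : 0 < R) (k j : ℕ) (p : ℕ × ℕ) :
    dyadicSquare R (k + j) p ⊆ dyadicSquare R k (ancestor j p) := by
  induction j generalizing p with
  | zero => simp [ancestor]
  | succ j ih =>
    rw [ancestor_succ]
    exact (dyadicSquare_succ_subset hR (k + j) p).trans (ih (parent p))

lemma dyadicSquare_subset_biUnion_children (hR : 0 < R) (n : ℕ) (q : ℕ × ℕ) :
    dyadicSquare R n q ⊆ ⋃ p ∈ children q, dyadicSquare R (n + 1) p := by
  intro y ⟨hre, him⟩
  rw [dyadicInterval_eq_union hR] at hre him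
  simp only [mem_iUnion, children, Finset.mem_product, Finset.mem_insert, Finset.mem_singleton,
    exists_prop, Prod.exists]
  rcases hre with hre | hre <;> rcases him with him | him <;>
    exact ⟨_, _, ⟨by simp, by simp⟩, hre, him⟩

lemma dist_le_of_mem_dyadicSquare {n : ℕ} {p : ℕ × ℕ} {a b : ℂ}
    (ha : a ∈ dyadicSquare R n p) (hb : b ∈ dyadicSquare R n p) : dist a b ≤ 2 * side R n := by
  obtain ⟨⟨ha1, ha2⟩, ha3, ha4⟩ := ha
  obtain ⟨⟨hb1, hb2⟩, hb3, hb4⟩ := hb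
  have hre : |(a - b).re| ≤ side R n := by
    rw [Complex.sub_re, abs_le]; constructor <;> linarith
  have him : |(a - b).im| ≤ side R n := by
    rw [Complex.sub_im, abs_le]; constructor <;> linarith
  calc dist a b = ‖a - b‖ := Complex.dist_eq a b
    _ ≤ |(a - b).re| + |(a - b).im| := Complex.norm_le_abs_re_add_abs_im _
    _ ≤ 2 * side R n := by linarith

lemma ediam_dyadicSquare_le (n : ℕ) (p : ℕ × ℕ) :
    Metric.ediam (dyadicSquare R n p) ≤ ENNReal.ofReal (2 * side R n) :=
  Metric.ediam_le fun _ ha _ hb => by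
    rw [edist_dist]; exact ENNReal.ofReal_le_ofReal (dist_le_of_mem_dyadicSquare ha hb)

lemma ball_subset_dyadicSquare_zero (R : ℝ) : Metric.ball 0 R ⊆ dyadicSquare R 0 (0, 0) := by
  intro y hy
  have hre := (Complex.abs_re_le_norm y).trans_lt (mem_ball_zero_iff.1 hy)
  have him := (Complex.abs_im_le_norm y).trans_lt (mem_ball_zero_iff.1 hy)
  rw [abs_lt] at hre him
  simp only [dyadicSquare, dyadicInterval, side, Complex.mem_reProdIm, mem_Ico]
  norm_num
  constructor <;> constructor <;> linarith

end DyadicGrid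

section Weights

def content (σ R : ℝ) (E : Set ℂ) (n : ℕ) (p : ℕ × ℕ) : ℝ :=
  (hausdorffContent σ (E ∩ dyadicSquare R n p)).toReal

def childrenContent (σ R : ℝ) (E : Set ℂ) (n : ℕ) (q : ℕ × ℕ) : ℝ :=
  ∑ p ∈ children q, content σ R E (n + 1) p

/-- Frostman's mass distribution. Where `childrenContent` vanishes, so does the weight of the
parent, hence the junk value `x / 0 = 0` is harmless. -/
def weight (σ R : ℝ) (E : Set ℂ) : ℕ → ℕ × ℕ → ℝ
  | 0, p => content σ R E 0 p
  | n + 1, p =>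
    content σ R E (n + 1) p * weight σ R E n (parent p) / childrenContent σ R E n (parent p)

/-- Bounds `hausdorffGauge σ` of a generation-`n` square, as `2 * side R n` bounds its diameter. -/
def gaugeBound (σ R : ℝ) (n : ℕ) : ℝ := (2 * side R n) ^ σ

lemma content_nonneg (n : ℕ) (p : ℕ × ℕ) : 0 ≤ content σ R E n p := ENNReal.toReal_nonneg

lemma childrenContent_nonneg (n : ℕ) (q : ℕ × ℕ) : 0 ≤ childrenContent σ R E n q :=
  Finset.sum_nonneg fun _ _ => content_nonneg _ _

lemma hausdorffContent_inter_dyadicSquare_le (hσ : 0 ≤ σ) (n : ℕ) (p : ℕ × ℕ) :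
    hausdorffContent σ (E ∩ dyadicSquare R n p) ≤ ENNReal.ofReal (2 * side R n) ^ σ :=
  (hausdorffContent_le_ediam σ _).trans <| ENNReal.rpow_le_rpow
    ((Metric.ediam_mono inter_subset_right).trans (ediam_dyadicSquare_le n p)) hσ

lemma content_le_gaugeBound (hσ : 0 ≤ σ) (hR : 0 < R) (n : ℕ) (p : ℕ × ℕ) :
    content σ R E n p ≤ gaugeBound σ R n := by
  have hside : 0 < 2 * side R n := by linarith [side_pos hR n]
  have h := hausdorffContent_inter_dyadicSquare_le (E := E) (R := R) hσ n p
  rw [ENNReal.ofReal_rpow_of_pos hside] at h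
  simpa [content, gaugeBound, ENNReal.toReal_ofReal (Real.rpow_nonneg hside.le σ)] using
    ENNReal.toReal_mono ENNReal.ofReal_ne_top h

lemma content_le_childrenContent (hσ : 0 ≤ σ) (hR : 0 < R) (n : ℕ) (q : ℕ × ℕ) :
    content σ R E n q ≤ childrenContent σ R E n q := by
  have hfin : ∀ p ∈ children q, hausdorffContent σ (E ∩ dyadicSquare R (n + 1) p) ≠ ⊤ :=
    fun p _ => ne_top_of_le_ne_top (ENNReal.rpow_ne_top_of_nonneg hσ ENNReal.ofReal_ne_top)
      (hausdorffContent_inter_dyadicSquare_le hσ (n + 1) p)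
  have hcover : E ∩ dyadicSquare R n q ⊆ ⋃ p ∈ children q, E ∩ dyadicSquare R (n + 1) p := by
    rw [← inter_iUnion₂]
    exact inter_subset_inter_right E (dyadicSquare_subset_biUnion_children hR n q)
  have hsub := (measure_mono (μ := hausdorffContent σ) hcover).trans
    (measure_biUnion_finset_le (children q) _)
  simp only [childrenContent, content]
  rw [← ENNReal.toReal_sum hfin]
  exact ENNReal.toReal_mono (ENNReal.sum_ne_top.2 hfin) hsub

lemma weight_nonneg (n : ℕ) (p : ℕ × ℕ) : 0 ≤ weight σ R E n p := by
  induction n generalizing p with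
  | zero => exact content_nonneg _ _
  | succ n ih =>
    exact div_nonneg (mul_nonneg (content_nonneg _ _) (ih _)) (childrenContent_nonneg _ _)

lemma weight_le_content (hσ : 0 ≤ σ) (hR : 0 < R) (n : ℕ) (p : ℕ × ℕ) :
    weight σ R E n p ≤ content σ R E n p := by
  induction n generalizing p with
  | zero => exact le_rfl
  | succ n ih =>
    rw [weight]
    rcases (childrenContent_nonneg (σ := σ) (R := R) (E := E) n (parent p)).eq_or_lt with hS | hS
    · rw [← hS, div_zero]; exact content_nonneg _ _
    rw [div_le_iff₀ hS]
    exact mul_le_mul_of_nonneg_left ((ih _).trans (content_le_childrenContent hσ hR n _))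
      (content_nonneg _ _)

lemma weight_le_gaugeBound (hσ : 0 ≤ σ) (hR : 0 < R) (n : ℕ) (p : ℕ × ℕ) :
    weight σ R E n p ≤ gaugeBound σ R n :=
  (weight_le_content hσ hR n p).trans (content_le_gaugeBound hσ hR n p)

lemma content_ne_zero_of_weight_ne_zero {n : ℕ} {p : ℕ × ℕ} (h : weight σ R E n p ≠ 0) :
    content σ R E n p ≠ 0 := by
  cases n with
  | zero => exact h
  | succ n => rintro hc; simp [weight, hc] at h

lemma sum_weight_children (hσ : 0 ≤ σ) (hR : 0 < R) (n : ℕ) (q : ℕ × ℕ) :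
    ∑ p ∈ children q, weight σ R E (n + 1) p = weight σ R E n q := by
  rw [Finset.sum_congr rfl fun p hp => by rw [weight, mem_children.1 hp], ← Finset.sum_div,
    ← Finset.sum_mul]
  rcases (childrenContent_nonneg n q).eq_or_lt with hS | hS
  · have hw : weight σ R E n q = 0 := le_antisymm
      ((weight_le_content hσ hR n q).trans ((content_le_childrenContent hσ hR n q).trans hS.ge))
      (weight_nonneg _ _)
    simp [hw]
  · rw [← childrenContent, mul_div_cancel_left₀ _ hS.ne']

lemma sum_weight_mul_ancestor (hσ : 0 ≤ σ) (hR : 0 < R) (f : ℕ × ℕ → ℝ) (k j : ℕ) :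
    ∑ p ∈ grid (k + j), f (ancestor j p) * weight σ R E (k + j) p =
      ∑ q ∈ grid k, f q * weight σ R E k q := by
  induction j with
  | zero => simp [ancestor]
  | succ j ih =>
    rw [← add_assoc, sum_grid_succ, ← ih]
    refine Finset.sum_congr rfl fun q _ => ?_
    rw [← sum_weight_children hσ hR, Finset.mul_sum]
    refine Finset.sum_congr rfl fun p hp => ?_
    rw [ancestor_succ, mem_children.1 hp]

lemma sum_weight (hσ : 0 ≤ σ) (hR : 0 < R) (n : ℕ) :
    ∑ p ∈ grid n, weight σ R E n p = content σ R E 0 (0, 0) := by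
  simpa [grid, weight] using sum_weight_mul_ancestor (E := E) hσ hR (fun _ => 1) 0 n

lemma content_zero_pos (hσ : 0 ≤ σ) (hEb : E ⊆ Metric.ball 0 R)
    (h : hausdorffContent σ E ≠ 0) : 0 < content σ R E 0 (0, 0) := by
  rw [content, inter_eq_left.2 (hEb.trans (ball_subset_dyadicSquare_zero R))]
  exact ENNReal.toReal_pos h
    (hausdorffContent_ne_top hσ (Metric.isBounded_ball.subset hEb).ediam_ne_top)

end Weights

section Atoms

/-- The discretized measure of generation `n` puts the weight of each square at this point. -/
def atom (R : ℝ) (E : Set ℂ) (n : ℕ) (p : ℕ × ℕ) : ℂ :=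
  if h : (E ∩ dyadicSquare R n p).Nonempty then h.some else 0

lemma atom_mem {n : ℕ} {p : ℕ × ℕ} (h : weight σ R E n p ≠ 0) :
    atom R E n p ∈ E ∩ dyadicSquare R n p := by
  have hne : (E ∩ dyadicSquare R n p).Nonempty := by
    by_contra hempty
    apply content_ne_zero_of_weight_ne_zero h
    simp [content, not_nonempty_iff_eq_empty.1 hempty]
  rw [atom, dif_pos hne]
  exact hne.some_mem

lemma exists_Ico_nine (hR : 0 < R) (k : ℕ) {ρ : ℝ} (hρ : ρ ≤ 4 * side R k) (t : ℝ) :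
    ∃ a : ℕ, ∀ q : ℕ, ∀ x ∈ dyadicInterval R k q, |x - t| < ρ → q ∈ Finset.Ico a (a + 9) := by
  have hl := side_pos hR k
  set u := t + R - ρ
  refine ⟨⌊u / side R k⌋₊, fun q x ⟨hx1, hx2⟩ hxt => ?_⟩
  rw [abs_lt] at hxt
  have hu : u < (⌊u / side R k⌋₊ + 1) * side R k := by
    rw [← div_lt_iff₀ hl]; exact Nat.lt_floor_add_one _
  have hlow : ⌊u / side R k⌋₊ < q + 1 := by
    rw [Nat.floor_lt' (Nat.succ_ne_zero q), div_lt_iff₀ hl]; push_cast; linarith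
  have hhigh : (q : ℝ) < ⌊u / side R k⌋₊ + 9 := by
    by_contra! h
    nlinarith
  rw [Finset.mem_Ico]
  exact ⟨Nat.lt_succ_iff.1 hlow, by exact_mod_cast hhigh⟩

lemma card_filter_meets_ball_le (hR : 0 < R) (z : ℂ) (k : ℕ) {ρ : ℝ}
    (hρ : ρ ≤ 4 * side R k) :
    ((grid k).filter fun q => (dyadicSquare R k q ∩ Metric.ball z ρ).Nonempty).card ≤ 81 := by
  obtain ⟨a, ha⟩ := exists_Ico_nine hR k hρ z.re
  obtain ⟨b, hb⟩ := exists_Ico_nine hR k hρ z.im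
  have hsub : (grid k).filter (fun q => (dyadicSquare R k q ∩ Metric.ball z ρ).Nonempty)
      ⊆ Finset.Ico a (a + 9) ×ˢ Finset.Ico b (b + 9) := by
    intro q hq
    obtain ⟨-, y, ⟨hre, him⟩, hy⟩ := Finset.mem_filter.1 hq
    rw [Metric.mem_ball, Complex.dist_eq] at hy
    refine Finset.mem_product.2 ⟨ha q.1 y.re hre ?_, hb q.2 y.im him ?_⟩
    · exact (Complex.sub_re y z ▸ Complex.abs_re_le_norm (y - z)).trans_lt hy
    · exact (Complex.sub_im y z ▸ Complex.abs_im_le_norm (y - z)).trans_lt hy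
  simpa using Finset.card_le_card hsub

/-- These atoms lie in the generation-`k` ancestors meeting the ball, at most `81` squares of weight
at most `gaugeBound σ R k` each. -/
lemma sum_weight_near_le (hσ : 0 ≤ σ) (hR : 0 < R) (z : ℂ) {k n : ℕ} (hkn : k ≤ n) :
    ∑ p ∈ grid n with dist z (atom R E n p) < 4 * side R k, weight σ R E n p ≤
      81 * gaugeBound σ R k := by
  set near := fun q => (dyadicSquare R k q ∩ Metric.ball z (4 * side R k)).Nonempty
  obtain ⟨j, rfl⟩ := Nat.exists_eq_add_of_le hkn
  calc ∑ p ∈ grid (k + j) with dist z (atom R E (k + j) p) < 4 * side R k,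
        weight σ R E (k + j) p
      ≤ ∑ p ∈ grid (k + j), (if near (ancestor j p) then 1 else 0) * weight σ R E (k + j) p := by
        rw [Finset.sum_filter]
        refine Finset.sum_le_sum fun p _ => ?_
        by_cases hw : weight σ R E (k + j) p = 0
        · simp [hw]
        split_ifs with hd hn
        · rw [one_mul]
        · obtain ⟨hE, hsq⟩ := atom_mem hw
          exact absurd ⟨_, dyadicSquare_subset_ancestor hR k j p hsq,
            Metric.mem_ball.2 (dist_comm z _ ▸ hd)⟩ hn
        · exact mul_nonneg zero_le_one (weight_nonneg _ _)
        · rw [zero_mul]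
    _ = ∑ q ∈ grid k with near q, weight σ R E k q := by
        rw [sum_weight_mul_ancestor hσ hR (fun q => if near q then 1 else 0), Finset.sum_filter]
        simp only [boole_mul]
    _ ≤ 81 * gaugeBound σ R k := by
        refine (Finset.sum_le_card_nsmul _ _ _ fun q _ => weight_le_gaugeBound hσ hR k q).trans ?_
        rw [nsmul_eq_mul]
        gcongr
        · exact Real.rpow_nonneg (by linarith [side_pos hR k]) σ
        · exact_mod_cast card_filter_meets_ball_le hR z k le_rfl

end Atoms

section Potential

/-- If `r (k + 1) ≤ d < r k` then `d⁻¹ ≤ (r (k + 1))⁻¹`; the case `d < r n` is paid for by the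
last term. -/
lemma inv_le_sum_shells (r : ℕ → ℝ) (hr : ∀ k, 0 < r k) {d : ℝ} (hd : 0 < d) (n : ℕ) :
    d⁻¹ ≤ (r 0)⁻¹ + ∑ k ∈ Finset.range n, (if d < r k then (r (k + 1))⁻¹ else 0) +
      if d < r n then d⁻¹ else 0 := by
  have hinv : ∀ k, 0 ≤ (r k)⁻¹ := fun k => (inv_pos.2 (hr k)).le
  induction n with
  | zero =>
    split_ifs with h
    · simp [hinv 0]
    · simpa using inv_anti₀ (hr 0) (not_lt.1 h)
  | succ n ih =>
    rw [Finset.sum_range_succ]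
    have hstep : (if d < r n then d⁻¹ else 0) ≤
        (if d < r n then (r (n + 1))⁻¹ else 0) + if d < r (n + 1) then d⁻¹ else 0 := by
      split_ifs with h h'
      · linarith [hinv (n + 1)]
      · simpa using inv_anti₀ (hr (n + 1)) (not_lt.1 h')
      · simp [hd.le]
      · simp
    linarith

lemma rpow_two_mul_side (hR : 0 ≤ R) (s : ℝ) (n : ℕ) :
    (2 * side R n) ^ s = (4 * R) ^ s * ((1 / 2 : ℝ) ^ s) ^ n := by
  rw [two_mul_side, Real.mul_rpow (by positivity) (by positivity),
    Real.rpow_pow_comm (by norm_num)]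

lemma sum_gaugeBound_mul_inv_le (hσ : 1 < σ) (hR : 0 < R) (n : ℕ) :
    ∑ k ∈ Finset.range n, gaugeBound σ R k * (4 * side R (k + 1))⁻¹ ≤
      (4 * R) ^ (σ - 1) * (1 - (1 / 2 : ℝ) ^ (σ - 1))⁻¹ := by
  have hterm : ∀ k, gaugeBound σ R k * (4 * side R (k + 1))⁻¹ =
      (4 * R) ^ (σ - 1) * ((1 / 2 : ℝ) ^ (σ - 1)) ^ k := by
    intro k
    have hpos : 0 < 2 * side R k := by linarith [side_pos hR k]
    rw [gaugeBound, show 4 * side R (k + 1) = 2 * side R k by rw [side_succ]; ring,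
      ← div_eq_mul_inv, ← Real.rpow_sub_one hpos.ne', rpow_two_mul_side hR.le]
  have hgeom := geom_sum_Ico_le_of_lt_one (m := 0) (n := n)
    (by positivity : (0 : ℝ) ≤ (1 / 2) ^ (σ - 1))
    (Real.rpow_lt_one (by norm_num) (by norm_num) (by linarith))
  rw [← Finset.range_eq_Ico, pow_zero] at hgeom
  simp only [hterm, ← Finset.mul_sum]
  exact mul_le_mul_of_nonneg_left (hgeom.trans_eq (one_div _)) (by positivity)

lemma tendsto_gaugeBound_atTop (hσ : 0 < σ) (hR : 0 < R) :
    Tendsto (gaugeBound σ R) atTop (𝓝 0) := by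
  rw [show gaugeBound σ R = fun n => (4 * R) ^ σ * ((1 / 2 : ℝ) ^ σ) ^ n from
    funext (rpow_two_mul_side hR.le σ)]
  simpa using (tendsto_pow_atTop_nhds_zero_of_lt_one (by positivity)
    (Real.rpow_lt_one (by norm_num) (by norm_num) hσ)).const_mul ((4 * R) ^ σ)

/-- Each atom's contribution `w / d` is split over the shells of `inv_le_sum_shells`, and the mass
in each shell is controlled by `sum_weight_near_le`. -/
lemma sum_weight_mul_inv_dist_le (hσ : 0 ≤ σ) (hR : 0 < R) {z : ℂ} {δ : ℝ} (hδ : 0 < δ)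
    (hzE : ∀ x ∈ E, δ ≤ dist z x) (n : ℕ) :
    ∑ p ∈ grid n, weight σ R E n p * (dist z (atom R E n p))⁻¹ ≤
      content σ R E 0 (0, 0) * (4 * side R 0)⁻¹ +
        ∑ k ∈ Finset.range n, 81 * gaugeBound σ R k * (4 * side R (k + 1))⁻¹ +
          81 * gaugeBound σ R n * δ⁻¹ := by
  set r : ℕ → ℝ := fun k => 4 * side R k
  have hr : ∀ k, 0 < r k := fun k => by simp only [r]; linarith [side_pos hR k]
  set d : ℕ × ℕ → ℝ := fun p => dist z (atom R E n p)
  set w : ℕ × ℕ → ℝ := weight σ R E n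
  have hnear : ∀ k ≤ n, ∀ c ≥ 0, ∑ p ∈ grid n, w p * (if d p < r k then c else 0) ≤
      81 * gaugeBound σ R k * c := fun k hk c hc => by
    simp only [mul_ite, mul_zero]
    rw [← Finset.sum_filter, ← Finset.sum_mul]
    exact mul_le_mul_of_nonneg_right (sum_weight_near_le hσ hR z hk) hc
  have hpoint : ∀ p ∈ grid n, w p * (d p)⁻¹ ≤ w p * (r 0)⁻¹ +
      ∑ k ∈ Finset.range n, w p * (if d p < r k then (r (k + 1))⁻¹ else 0) +
        w p * (if d p < r n then δ⁻¹ else 0) := by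
    intro p _
    by_cases hw : w p = 0
    · simp [hw]
    have hδd : δ ≤ d p := hzE _ (atom_mem hw).1
    have hshell := inv_le_sum_shells r hr (hδ.trans_le hδd) n
    have hlast : (if d p < r n then (d p)⁻¹ else 0) ≤ if d p < r n then δ⁻¹ else 0 := by
      split_ifs
      exacts [inv_anti₀ hδ hδd, le_rfl]
    rw [← Finset.mul_sum, ← mul_add, ← mul_add]
    exact mul_le_mul_of_nonneg_left (by linarith) (weight_nonneg n p)
  refine (Finset.sum_le_sum hpoint).trans ?_
  rw [Finset.sum_add_distrib, Finset.sum_add_distrib, ← Finset.sum_mul, sum_weight hσ hR,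
    Finset.sum_comm]
  gcongr with k hk
  · exact hnear k (Finset.mem_range.1 hk).le _ (inv_pos.2 (hr (k + 1))).le
  · exact hnear n le_rfl _ (inv_pos.2 hδ).le

def potentialConst (σ R : ℝ) (E : Set ℂ) : ℝ :=
  content σ R E 0 (0, 0) * (8 * R)⁻¹ + 81 * ((4 * R) ^ (σ - 1) * (1 - (1 / 2 : ℝ) ^ (σ - 1))⁻¹)

lemma sum_weight_mul_inv_dist_le_potentialConst (hσ : 1 < σ) (hR : 0 < R) {z : ℂ} {δ : ℝ}
    (hδ : 0 < δ) (hzE : ∀ x ∈ E, δ ≤ dist z x) (n : ℕ) :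
    ∑ p ∈ grid n, weight σ R E n p * (dist z (atom R E n p))⁻¹ ≤
      potentialConst σ R E + 81 * gaugeBound σ R n * δ⁻¹ := by
  refine (sum_weight_mul_inv_dist_le (by linarith) hR hδ hzE n).trans ?_
  have hgeom := sum_gaugeBound_mul_inv_le hσ hR n
  rw [potentialConst, show 4 * side R 0 = 8 * R by simp [side]; ring]
  simp only [mul_assoc, ← Finset.mul_sum]
  linarith

end Potential

section CauchyTransform

def cauchyApprox (σ R : ℝ) (E : Set ℂ) (n : ℕ) (z : ℂ) : ℂ :=
  ∑ p ∈ grid n, (weight σ R E n p : ℂ) * (z - atom R E n p)⁻¹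

/-- The Cauchy transform `z ↦ ∫ dμ(ζ) / (z - ζ)` of the Frostman measure `μ`, as the limit of the
Cauchy transforms of its discretizations. -/
def cauchyTransform (σ R : ℝ) (E : Set ℂ) (z : ℂ) : ℂ :=
  cauchyApprox σ R E 0 z + ∑' n, (cauchyApprox σ R E (n + 1) z - cauchyApprox σ R E n z)

lemma norm_inv_sub_inv_le {z a b : ℂ} {ρ ρ' : ℝ} (hρ : 0 < ρ) (hρ' : 0 < ρ')
    (ha : ρ ≤ dist z a) (hb : ρ' ≤ dist z b) :
    ‖(z - a)⁻¹ - (z - b)⁻¹‖ ≤ dist a b / (ρ * ρ') := by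
  rw [dist_eq_norm] at ha hb
  have ha0 : z - a ≠ 0 := norm_pos_iff.1 (hρ.trans_le ha)
  have hb0 : z - b ≠ 0 := norm_pos_iff.1 (hρ'.trans_le hb)
  rw [inv_sub_inv ha0 hb0, sub_sub_sub_cancel_left, norm_div, norm_mul, ← dist_eq_norm]
  gcongr

lemma weight_parent_ne_zero {n : ℕ} {p : ℕ × ℕ} (h : weight σ R E (n + 1) p ≠ 0) :
    weight σ R E n (parent p) ≠ 0 := by
  rintro h0
  simp [weight, h0] at h

lemma norm_cauchyApprox_le (n : ℕ) (z : ℂ) :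
    ‖cauchyApprox σ R E n z‖ ≤ ∑ p ∈ grid n, weight σ R E n p * (dist z (atom R E n p))⁻¹ := by
  refine (norm_sum_le _ _).trans (Finset.sum_le_sum fun p _ => ?_)
  rw [norm_mul, Complex.norm_real, norm_inv, Real.norm_of_nonneg (weight_nonneg _ _),
    ← dist_eq_norm]

/-- Passing from generation `n` to `n + 1` moves each piece of mass by at most the diameter
`2 · side R n` of a square of generation `n`. -/
lemma norm_cauchyApprox_succ_sub_le (hσ : 0 ≤ σ) (hR : 0 < R) {z : ℂ} {δ : ℝ} (hδ : 0 < δ)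
    (hzE : ∀ x ∈ E, δ ≤ dist z x) (n : ℕ) :
    ‖cauchyApprox σ R E (n + 1) z - cauchyApprox σ R E n z‖ ≤
      content σ R E 0 (0, 0) * (2 * side R n) / (δ * δ) := by
  have hsplit : cauchyApprox σ R E (n + 1) z - cauchyApprox σ R E n z =
      ∑ q ∈ grid n, ∑ p ∈ children q, (weight σ R E (n + 1) p : ℂ) *
        ((z - atom R E (n + 1) p)⁻¹ - (z - atom R E n q)⁻¹) := by
    simp only [cauchyApprox, sum_grid_succ, mul_sub, Finset.sum_sub_distrib, ← Finset.sum_mul,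
      ← sum_weight_children hσ hR n, Complex.ofReal_sum]
  have hterm : ∀ q ∈ grid n, ∀ p ∈ children q,
      ‖(weight σ R E (n + 1) p : ℂ) * ((z - atom R E (n + 1) p)⁻¹ - (z - atom R E n q)⁻¹)‖ ≤
        weight σ R E (n + 1) p * (2 * side R n / (δ * δ)) := by
    intro q _ p hp
    by_cases hw : weight σ R E (n + 1) p = 0
    · simp [hw]
    have hq := mem_children.1 hp
    obtain ⟨hpE, hpsq⟩ := atom_mem hw
    obtain ⟨hqE, hqsq⟩ := atom_mem (hq ▸ weight_parent_ne_zero hw)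
    rw [norm_mul, Complex.norm_real, Real.norm_of_nonneg (weight_nonneg _ _)]
    refine mul_le_mul_of_nonneg_left ?_ (weight_nonneg _ _)
    refine (norm_inv_sub_inv_le hδ hδ (hzE _ hpE) (hzE _ hqE)).trans ?_
    gcongr
    exact dist_le_of_mem_dyadicSquare (hq ▸ dyadicSquare_succ_subset hR n p hpsq) hqsq
  rw [hsplit]
  refine (norm_sum_le _ _).trans <| (Finset.sum_le_sum fun q hq =>
    (norm_sum_le _ _).trans (Finset.sum_le_sum (hterm q hq))).trans_eq ?_
  rw [← sum_grid_succ, ← Finset.sum_mul, sum_weight hσ hR]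
  ring

lemma summable_side (R : ℝ) : Summable (side R) := by
  have h : side R = fun n => 2 * R * (1 / 2) ^ n := funext fun n => by simp [side, div_eq_mul_inv]
  exact h ▸ summable_geometric_two.mul_left (2 * R)

lemma tendsto_cauchyApprox (hσ : 0 ≤ σ) (hR : 0 < R) {z : ℂ} {δ : ℝ} (hδ : 0 < δ)
    (hzE : ∀ x ∈ E, δ ≤ dist z x) :
    Tendsto (fun n => cauchyApprox σ R E n z) atTop (𝓝 (cauchyTransform σ R E z)) := by
  have hsum := (Summable.of_norm_bounded
    (((summable_side R).mul_left 2).mul_left _ |>.div_const (δ * δ))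
    (norm_cauchyApprox_succ_sub_le hσ hR hδ hzE)).hasSum.tendsto_sum_nat
  simp only [Finset.sum_range_sub (fun n => cauchyApprox σ R E n z)] at hsum
  simpa [cauchyTransform] using hsum.const_add (cauchyApprox σ R E 0 z)

lemma exists_pos_forall_le_dist (hE : IsClosed E) {z : ℂ} (hz : z ∉ E) :
    ∃ δ > 0, ∀ x ∈ E, δ ≤ dist z x := by
  obtain ⟨δ, hδ, hball⟩ := Metric.isOpen_iff.1 hE.isOpen_compl z hz
  exact ⟨δ, hδ, fun x hx => not_lt.1 fun h => hball (Metric.mem_ball'.2 h) hx⟩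

lemma differentiableOn_cauchyApprox (n : ℕ) :
    DifferentiableOn ℂ (cauchyApprox σ R E n) Eᶜ := by
  unfold cauchyApprox
  refine DifferentiableOn.fun_sum fun p _ => ?_
  by_cases hw : weight σ R E n p = 0
  · simp only [hw, Complex.ofReal_zero, zero_mul]
    exact differentiableOn_const 0
  refine ((differentiableOn_id.sub_const _).inv fun z hz => sub_ne_zero.2 ?_).const_mul _
  rintro rfl
  exact hz (atom_mem hw).1

lemma differentiableOn_cauchyTransform (hσ : 0 ≤ σ) (hR : 0 < R) (hE : IsClosed E) :
    DifferentiableOn ℂ (cauchyTransform σ R E) Eᶜ := by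
  intro z₀ hz₀
  obtain ⟨δ, hδ, hfar⟩ := exists_pos_forall_le_dist hE hz₀
  have hU : ∀ z ∈ Metric.ball z₀ (δ / 2), ∀ x ∈ E, δ / 2 ≤ dist z x := fun z hz x hx => by
    rw [Metric.mem_ball] at hz
    linarith [hfar x hx, dist_triangle z₀ z x, dist_comm z z₀]
  have hUE : Metric.ball z₀ (δ / 2) ⊆ Eᶜ := fun z hz hzE => by
    linarith [hU z hz z hzE, dist_self z]
  have hdiff : DifferentiableOn ℂ (cauchyTransform σ R E) (Metric.ball z₀ (δ / 2)) :=
    ((differentiableOn_cauchyApprox 0).mono hUE).add <|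
      Complex.differentiableOn_tsum_of_summable_norm
      (((summable_side R).mul_left 2).mul_left _ |>.div_const (δ / 2 * (δ / 2)))
      (fun n => ((differentiableOn_cauchyApprox (n + 1)).sub
        (differentiableOn_cauchyApprox n)).mono hUE) Metric.isOpen_ball
      (fun n z hz => norm_cauchyApprox_succ_sub_le hσ hR (half_pos hδ) (hU z hz) n)
  exact (hdiff.differentiableAt (Metric.ball_mem_nhds z₀ (half_pos hδ))).differentiableWithinAt

lemma norm_cauchyTransform_le (hσ : 1 < σ) (hR : 0 < R) (hE : IsClosed E) {z : ℂ}
    (hz : z ∉ E) : ‖cauchyTransform σ R E z‖ ≤ potentialConst σ R E := by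
  obtain ⟨δ, hδ, hfar⟩ := exists_pos_forall_le_dist hE hz
  have hbound : Tendsto (fun n => potentialConst σ R E + 81 * gaugeBound σ R n * δ⁻¹) atTop
      (𝓝 (potentialConst σ R E)) := by
    simpa using (((tendsto_gaugeBound_atTop (by linarith) hR).const_mul 81).mul_const δ⁻¹).const_add
      (potentialConst σ R E)
  refine le_of_tendsto_of_tendsto (tendsto_cauchyApprox (by linarith) hR hδ hfar).norm hbound
    (Eventually.of_forall fun n => ?_)
  exact (norm_cauchyApprox_le n z).trans
    (sum_weight_mul_inv_dist_le_potentialConst hσ hR hδ hfar n)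

lemma norm_cauchyTransform_sub_le (hσ : 0 ≤ σ) (hR : 0 < R) (hEb : E ⊆ Metric.ball 0 R)
    {z : ℂ} (hz : 2 * R ≤ ‖z‖) :
    ‖cauchyTransform σ R E z - content σ R E 0 (0, 0) / z‖ ≤
      2 * content σ R E 0 (0, 0) * R / ‖z‖ ^ 2 := by
  have hz0 : 0 < ‖z‖ := by linarith
  have hfar : ∀ x ∈ E, ‖z‖ / 2 ≤ dist z x := fun x hx => by
    have hx := mem_ball_zero_iff.1 (hEb hx)
    rw [dist_eq_norm]
    linarith [norm_sub_norm_le z x]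
  have hterm : ∀ n, ∀ p ∈ grid n,
      ‖(weight σ R E n p : ℂ) * ((z - atom R E n p)⁻¹ - (z - 0)⁻¹)‖ ≤
        weight σ R E n p * (2 * R / ‖z‖ ^ 2) := by
    intro n p _
    by_cases hw : weight σ R E n p = 0
    · simp [hw]
    have hx := (atom_mem hw).1
    rw [norm_mul, Complex.norm_real, Real.norm_of_nonneg (weight_nonneg _ _)]
    refine mul_le_mul_of_nonneg_left ?_ (weight_nonneg _ _)
    refine (norm_inv_sub_inv_le (half_pos hz0) hz0 (hfar _ hx) (by simp)).trans ?_
    rw [dist_zero_right, div_le_div_iff₀ (by positivity) (by positivity)]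
    nlinarith [mem_ball_zero_iff.1 (hEb hx)]
  have happrox : ∀ n, ‖cauchyApprox σ R E n z - content σ R E 0 (0, 0) / z‖ ≤
      2 * content σ R E 0 (0, 0) * R / ‖z‖ ^ 2 := by
    intro n
    rw [← sum_weight (E := E) hσ hR n, Complex.ofReal_sum, Finset.sum_div, cauchyApprox,
      ← Finset.sum_sub_distrib]
    refine (norm_sum_le _ _).trans ((Finset.sum_le_sum
      (g := fun p => weight σ R E n p * (2 * R / ‖z‖ ^ 2)) fun p hp => ?_).trans_eq ?_)
    · rw [div_eq_mul_inv, ← mul_sub]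
      simpa only [sub_zero] using hterm n p hp
    · rw [← Finset.sum_mul]; ring
  exact le_of_tendsto ((tendsto_cauchyApprox hσ hR (half_pos hz0) hfar).sub_const _).norm
    (Eventually.of_forall happrox)

lemma cauchyTransform_ne (hσ : 0 ≤ σ) (hR : 0 < R)
    (hEb : E ⊆ Metric.ball 0 R) (hW : 0 < content σ R E 0 (0, 0)) :
    cauchyTransform σ R E (4 * R : ℝ) ≠ cauchyTransform σ R E (16 * R : ℝ) := by
  set W := content σ R E 0 (0, 0)
  have hasymp : ∀ t : ℝ, 2 * R ≤ t →
      ‖cauchyTransform σ R E t - (W / t : ℝ)‖ ≤ 2 * W * R / t ^ 2 := fun t ht => by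
    have hnorm : ‖(t : ℂ)‖ = t := by rw [Complex.norm_real, Real.norm_of_nonneg (by linarith)]
    simpa [hnorm] using norm_cauchyTransform_sub_le hσ hR hEb (z := t) (hnorm.symm ▸ ht)
  intro heq
  have h1 := hasymp (4 * R) (by linarith)
  have h2 := hasymp (16 * R) (by linarith)
  rw [heq] at h1
  have h3 := norm_sub_le_norm_sub_add_norm_sub ((W / (4 * R) : ℝ) : ℂ)
    (cauchyTransform σ R E (16 * R : ℝ)) ((W / (16 * R) : ℝ) : ℂ)
  rw [← Complex.ofReal_sub, Complex.norm_real, Real.norm_eq_abs,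
    norm_sub_rev ((W / (4 * R) : ℝ) : ℂ)] at h3
  have hu : 0 < W / (128 * R) := by positivity
  have e1 : W / (4 * R) - W / (16 * R) = 24 * (W / (128 * R)) := by field_simp; ring
  have e2 : 2 * W * R / (4 * R) ^ 2 = 16 * (W / (128 * R)) := by field_simp; ring
  have e3 : 2 * W * R / (16 * R) ^ 2 = W / (128 * R) := by field_simp; ring
  rw [e1, abs_of_pos (by positivity)] at h3
  linarith

end CauchyTransform

end Frostman

end

/-- (Frostman) A compact set `E ⊆ ℂ` of Hausdorff dimension strictly bigger than one is not
`H∞`-removable: there is a nonconstant bounded holomorphic function on `ℂ \ E`. -/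
theorem stmt_6 (E : Set ℂ) (hE : IsCompact E) (hdim : 1 < dimH E) :
    ∃ f : ℂ → ℂ, DifferentiableOn ℂ f Eᶜ ∧ (∃ M : ℝ, ∀ z ∈ Eᶜ, ‖f z‖ ≤ M) ∧
      ∃ z ∈ Eᶜ, ∃ w ∈ Eᶜ, f z ≠ f w := by
  obtain ⟨σ, h1σ, hσdim⟩ := ENNReal.lt_iff_exists_nnreal_btwn.1 hdim
  have hσ : (1 : ℝ) < σ := by exact_mod_cast h1σ
  obtain ⟨R, hR, hEb⟩ := hE.isBounded.subset_ball_lt 0 0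
  have hW := Frostman.content_zero_pos σ.coe_nonneg hEb
    (Frostman.hausdorffContent_ne_zero_of_lt_dimH (by exact_mod_cast zero_lt_one.trans h1σ) hσdim)
  have hfar : ∀ t : ℝ, R ≤ t → (t : ℂ) ∈ Eᶜ := fun t ht htE => by
    have := mem_ball_zero_iff.1 (hEb htE)
    rw [Complex.norm_real, Real.norm_of_nonneg (by linarith)] at this
    linarith
  refine ⟨Frostman.cauchyTransform σ R E,
    Frostman.differentiableOn_cauchyTransform σ.coe_nonneg hR hE.isClosed,
    ⟨Frostman.potentialConst σ R E,
      fun _ hz => Frostman.norm_cauchyTransform_le hσ hR hE.isClosed hz⟩,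
    _, hfar (4 * R) (by linarith), _, hfar (16 * R) (by linarith), ?_⟩
  exact Frostman.cauchyTransform_ne σ.coe_nonneg hR hEb hW
end

section
/- (Carleson) Let E₁, E₂ ⊆ ℝ be compact sets and suppose the one-dimensional Lebesgue measure of E₂ is positive. Let E := { x + y·i : x ∈ E₁, y ∈ E₂ } ⊆ ℂ. Then E is A-removable if and only if E₁ is countable. -/
/-!
If `E₁` is countable, the points where `f` fails to be analytic form a closed subset of `E` whose
real parts are countably many, so by Baire one vertical slice of it contains a relatively open
piece of it. Near that piece `f` is continuous and holomorphic off a vertical line, hence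
holomorphic by Morera's theorem. So `f` is entire and, having a limit at infinity, constant.

If `E₁` is uncountable it carries an atomless probability measure `μ`. Let
`G(w) = ∫_{E₂} dy / (w - i y)`. Its real part is a Poisson integral, so `|Re G| ≤ π` and
`exp (-G) - 1` is bounded; it is holomorphic off `i E₂`, continuous off the imaginary axis and
vanishes at infinity. Hence `f(z) = ∫ (exp (-G (z - x)) - 1) dμ(x)` is continuous (`μ` has no
atoms), holomorphic off `E` and tends to `0` at infinity, while `Re G > 0` to the right of the
imaginary axis makes `Re f < 0` to the right of `E`.
-/

open MeasureTheory Filter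

/-- A compact set `E ⊆ ℂ` is `A`-removable if every continuous function `f : ℂ → ℂ` that is
holomorphic on `ℂ \ E` and has a finite limit at infinity is constant. -/
def ARemovable (E : Set ℂ) : Prop :=
  ∀ f : ℂ → ℂ, Continuous f → DifferentiableOn ℂ f Eᶜ →
    (∃ L : ℂ, Tendsto f (cocompact ℂ) (nhds L)) → ∀ z w : ℂ, f z = f w

open Complex Metric Set Topology
open scoped Real ENNReal Interval

section VerticalLine

variable {f : ℂ → ℂ} {x₀ : ℝ}

lemma integral_boundary_rect_eq_zero_of_notMem_Ioo {z w : ℂ}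
    (hx₀ : x₀ ∉ Ioo (min z.re w.re) (max z.re w.re)) (hc : ContinuousOn f (Rectangle z w))
    (hd : ∀ p ∈ Rectangle z w, p.re ≠ x₀ → DifferentiableAt ℂ f p) :
    (∫ x : ℝ in z.re..w.re, f (x + z.im * I)) - (∫ x : ℝ in z.re..w.re, f (x + w.im * I)) +
      I • (∫ y : ℝ in z.im..w.im, f (w.re + y * I)) -
      I • (∫ y : ℝ in z.im..w.im, f (z.re + y * I)) = 0 :=
  integral_boundary_rect_eq_zero_of_differentiable_on_off_countable f z w ∅ countable_empty hc
    fun p hp => hd p ⟨Ioo_subset_Icc_self hp.1.1, Ioo_subset_Icc_self hp.1.2⟩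
      fun h => hx₀ (h ▸ hp.1.1)

lemma integral_boundary_rect_eq_zero_of_differentiableAt_of_re_ne {z w : ℂ}
    (hc : ContinuousOn f (Rectangle z w))
    (hd : ∀ p ∈ Rectangle z w, p.re ≠ x₀ → DifferentiableAt ℂ f p) :
    (∫ x : ℝ in z.re..w.re, f (x + z.im * I)) - (∫ x : ℝ in z.re..w.re, f (x + w.im * I)) +
      I • (∫ y : ℝ in z.im..w.im, f (w.re + y * I)) -
      I • (∫ y : ℝ in z.im..w.im, f (z.re + y * I)) = 0 := by
  by_cases hx : x₀ ∈ Ioo (min z.re w.re) (max z.re w.re)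
  swap
  · exact integral_boundary_rect_eq_zero_of_notMem_Ioo hx hc hd
  -- Split the rectangle along the line `re = x₀`, which then lies on the boundary of both halves.
  have hx' : x₀ ∈ [[z.re, w.re]] := Ioo_subset_Icc_self hx
  have hleft : Rectangle z ⟨x₀, w.im⟩ ⊆ Rectangle z w :=
    reProdIm_subset_iff.2 (prod_mono (uIcc_subset_uIcc_left hx') subset_rfl)
  have hright : Rectangle ⟨x₀, z.im⟩ w ⊆ Rectangle z w :=
    reProdIm_subset_iff.2 (prod_mono (uIcc_subset_uIcc_right hx') subset_rfl)
  have h₁ := integral_boundary_rect_eq_zero_of_notMem_Ioo (z := z) (w := ⟨x₀, w.im⟩)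
    (by simpa using le_of_lt) (hc.mono hleft) fun p hp => hd p (hleft hp)
  have h₂ := integral_boundary_rect_eq_zero_of_notMem_Ioo (z := ⟨x₀, z.im⟩) (w := w)
    (by simpa using le_of_lt) (hc.mono hright) fun p hp => hd p (hright hp)
  have hcont : ∀ b ∈ [[z.im, w.im]], ContinuousOn (fun x : ℝ => f (x + b * I)) [[z.re, w.re]] :=
    fun b hb => hc.comp (by fun_prop) fun x hx => by simp [Rectangle, mem_reProdIm, hx, hb]
  have hsplit : ∀ b ∈ [[z.im, w.im]], (∫ x : ℝ in z.re..x₀, f (x + b * I)) +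
      ∫ x : ℝ in x₀..w.re, f (x + b * I) = ∫ x : ℝ in z.re..w.re, f (x + b * I) := fun b hb =>
    intervalIntegral.integral_add_adjacent_intervals
      (((hcont b hb).mono (uIcc_subset_uIcc_left hx')).intervalIntegrable)
      (((hcont b hb).mono (uIcc_subset_uIcc_right hx')).intervalIntegrable)
  dsimp only at h₁ h₂
  linear_combination h₁ + h₂ - hsplit _ left_mem_uIcc + hsplit _ right_mem_uIcc

lemma differentiableOn_of_differentiableAt_of_re_ne {U : Set ℂ} (hU : IsOpen U)
    (hc : ContinuousOn f U) (hd : ∀ z ∈ U, z.re ≠ x₀ → DifferentiableAt ℂ f z) :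
    DifferentiableOn ℂ f U :=
  (isConservativeOn_and_continuousOn_iff_isDifferentiableOn hU).1 ⟨fun z w hzw => by
    rw [← add_eq_zero_iff_eq_neg, wedgeIntegral_add_wedgeIntegral_eq]
    exact integral_boundary_rect_eq_zero_of_differentiableAt_of_re_ne (hc.mono hzw)
      fun p hp => hd p (hzw hp), hc⟩

end VerticalLine

lemma IsClosed.exists_eventually_nhdsWithin_eq_of_countable_image {X Y : Type*} [MetricSpace X]
    [CompleteSpace X] [TopologicalSpace Y] [T2Space Y] {C : Set X} (hC : IsClosed C)
    (hne : C.Nonempty) {g : X → Y} (hg : Continuous g) (hcnt : (g '' C).Countable) :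
    ∃ z₀ ∈ C, ∀ᶠ z in 𝓝[C] z₀, g z = g z₀ := by
  have := hC.completeSpace_coe
  have := hne.to_subtype
  have := hcnt.to_subtype
  obtain ⟨y, z₀, hz₀⟩ := nonempty_interior_of_iUnion_of_closed
    (f := fun y : g '' C => {z : C | g z = y})
    (fun y => isClosed_eq (hg.comp continuous_subtype_val) continuous_const)
    (iUnion_eq_univ_iff.2 fun z => ⟨⟨g z, mem_image_of_mem g z.2⟩, rfl⟩)
  refine ⟨z₀, z₀.2, ?_⟩
  rw [← map_nhds_subtype_val, eventually_map]
  filter_upwards [mem_interior_iff_mem_nhds.1 hz₀] with z hz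
  exact hz.trans (interior_subset hz₀).symm

theorem aRemovable_of_countable_image_re {E : Set ℂ} (hE : IsClosed E)
    (hcnt : (re '' E).Countable) : ARemovable E := by
  intro f hf hd ⟨L, hL⟩
  suffices hA : ∀ z, AnalyticAt ℂ f z by
    have hdiff : Differentiable ℂ f := fun z => (hA z).differentiableAt
    exact fun z w => by
      rw [hdiff.apply_eq_of_tendsto_cocompact z hL, hdiff.apply_eq_of_tendsto_cocompact w hL]
  set C := {z | ¬AnalyticAt ℂ f z}
  have hCE : C ⊆ E := fun z hz => by_contra fun hzE =>
    hz (hd.analyticAt (hE.isOpen_compl.mem_nhds hzE))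
  by_contra! hne
  -- Baire: some vertical slice of the singular set `C` contains a relatively open piece of `C`.
  obtain ⟨z₀, hz₀, hslice⟩ := ((isOpen_analyticAt ℂ f).isClosed_compl
    ).exists_eventually_nhdsWithin_eq_of_countable_image hne continuous_re
    (hcnt.mono (image_mono hCE))
  obtain ⟨ε, hε, hball⟩ := Metric.eventually_nhds_iff_ball.1 (eventually_nhdsWithin_iff.1 hslice)
  have hdiff : DifferentiableOn ℂ f (ball z₀ ε) :=
    differentiableOn_of_differentiableAt_of_re_ne isOpen_ball hf.continuousOn
      fun z hz hre => by_contra fun hnd => hre (hball z hz fun hA => hnd hA.differentiableAt)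
  exact hz₀ (hdiff.analyticAt (ball_mem_nhds z₀ hε))

section IntegralComposeSub

variable {α : Type*} [MeasurableSpace α] {μ : Measure α} [IsFiniteMeasure μ] {h : ℂ → ℂ}
  {φ : α → ℂ}

lemma differentiableAt_integral_comp_sub (hh : Measurable h) (hφ : Measurable φ) {z₀ : ℂ}
    {r B : ℝ} (hr : 0 < r) (hd : ∀ᵐ a ∂μ, DifferentiableOn ℂ h (ball (z₀ - φ a) r))
    (hB : ∀ᵐ a ∂μ, ∀ w ∈ ball (z₀ - φ a) r, ‖h w‖ ≤ B) :
    DifferentiableAt ℂ (fun z => ∫ a, h (z - φ a) ∂μ) z₀ := by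
  have hmeas : ∀ z, AEStronglyMeasurable (fun a => h (z - φ a)) μ :=
    fun z => (hh.comp (measurable_const.sub hφ)).aestronglyMeasurable
  have hball : ∀ a, ∀ z ∈ ball z₀ (r / 2), closedBall (z - φ a) (r / 4) ⊆ ball (z₀ - φ a) r := by
    intro a z hz w hw
    rw [mem_ball] at hz ⊢
    rw [mem_closedBall] at hw
    linarith [dist_triangle w (z - φ a) (z₀ - φ a), dist_sub_right z z₀ (φ a)]
  have hderiv_le : ∀ᵐ a ∂μ, ∀ z ∈ ball z₀ (r / 2), ‖deriv h (z - φ a)‖ ≤ B / (r / 4) := by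
    filter_upwards [hd, hB] with a hda hBa z hz
    exact norm_deriv_le_of_forall_mem_sphere_norm_le (by positivity)
      (hda.diffContOnCl_ball (hball a z hz))
      fun w hw => hBa w (hball a z hz (sphere_subset_closedBall hw))
  have hderiv : ∀ᵐ a ∂μ, ∀ z ∈ ball z₀ (r / 2),
      HasDerivAt (fun z => h (z - φ a)) (deriv h (z - φ a)) z := by
    filter_upwards [hd] with a hda z hz
    have hmem : z - φ a ∈ ball (z₀ - φ a) r := hball a z hz (mem_closedBall_self (by positivity))
    exact ((hda.differentiableAt (isOpen_ball.mem_nhds hmem)).hasDerivAt).comp_sub_const z (φ a)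
  have hint : Integrable (fun a => h (z₀ - φ a)) μ :=
    .of_bound (hmeas z₀) B (hB.mono fun a ha => ha _ (mem_ball_self hr))
  exact (hasDerivAt_integral_of_dominated_loc_of_deriv_le (ball_mem_nhds z₀ (half_pos hr))
    (.of_forall hmeas) hint
    ((measurable_deriv h).comp (measurable_const.sub hφ)).aestronglyMeasurable
    hderiv_le (integrable_const _) hderiv).2.differentiableAt

lemma tendsto_integral_comp_sub_cocompact (hh : Tendsto h (cocompact ℂ) (𝓝 0)) {K : Set ℂ}
    (hK : IsCompact K) (hφ : ∀ᵐ a ∂μ, φ a ∈ K) :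
    Tendsto (fun z => ∫ a, h (z - φ a) ∂μ) (cocompact ℂ) (𝓝 0) := by
  rw [Metric.tendsto_nhds]
  intro ε hε
  set δ := ε / (μ.real univ + 1)
  have hδ : 0 < δ := by positivity
  obtain ⟨L, hL, hLh⟩ := mem_cocompact.1 (hh.eventually (ball_mem_nhds 0 hδ))
  filter_upwards [(hL.add hK).compl_mem_cocompact] with z hz
  have hbound : ∀ᵐ a ∂μ, ‖h (z - φ a)‖ ≤ δ := by
    filter_upwards [hφ] with a ha
    have : z - φ a ∉ L := fun hL' => hz ⟨_, hL', _, ha, sub_add_cancel z (φ a)⟩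
    simpa using (show dist (h (z - φ a)) 0 < δ from hLh this).le
  rw [dist_zero_right]
  calc ‖∫ a, h (z - φ a) ∂μ‖ ≤ δ * μ.real univ := norm_integral_le_of_norm_le_const hbound
    _ < ε := by
      rw [div_mul_eq_mul_div, div_lt_iff₀ (by positivity)]
      nlinarith [measureReal_nonneg (μ := μ) (s := univ)]

lemma continuous_integral_comp_sub_ofReal {μ : Measure ℝ} [IsFiniteMeasure μ]
    [NullSingletonClass μ] (hh : Measurable h) {B : ℝ} (hB : ∀ w, ‖h w‖ ≤ B)
    (hc : ∀ w : ℂ, w.re ≠ 0 → ContinuousAt h w) :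
    Continuous (fun z : ℂ => ∫ x, h (z - x) ∂μ) := by
  refine continuous_iff_continuousAt.2 fun z₀ => continuousAt_of_dominated
    (.of_forall fun z => (hh.comp (measurable_const.sub measurable_ofReal)).aestronglyMeasurable)
    (.of_forall fun z => .of_forall fun x => hB _) (integrable_const B) ?_
  filter_upwards [μ.ae_ne z₀.re] with x hx
  exact (hc _ (by simpa [sub_eq_zero] using hx.symm)).comp (continuous_sub_right _).continuousAt

end IntegralComposeSub

section VerticalCauchyTransform

open ProbabilityTheory

variable {E : Set ℝ} {w : ℂ}

noncomputable def verticalCauchyTransform (E : Set ℝ) (w : ℂ) : ℂ := ∫ y in E, (w - y * I)⁻¹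

lemma re_inv_sub_ofReal_mul_I (w : ℂ) (y : ℝ) :
    ((w - y * I)⁻¹).re = w.re / (w.re ^ 2 + (w.im - y) ^ 2) := by
  simp [inv_re, normSq_apply, sq]

lemma abs_re_inv_sub_ofReal_mul_I (w : ℂ) (y : ℝ) :
    |((w - y * I)⁻¹).re| = π * cauchyPDFReal w.im (Real.nnabs w.re) y := by
  rw [re_inv_sub_ofReal_mul_I, cauchyPDFReal_def, Real.coe_nnabs, abs_div, sq_abs,
    abs_of_nonneg (add_nonneg (sq_nonneg w.re) (sq_nonneg (w.im - y))), ← mul_assoc,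
    ← mul_assoc, mul_inv_cancel₀ Real.pi_ne_zero, one_mul]
  ring

lemma re_verticalCauchyTransform (hint : IntegrableOn (fun y : ℝ => (w - y * I)⁻¹) E) :
    (verticalCauchyTransform E w).re = ∫ y in E, ((w - y * I)⁻¹).re := by
  rw [verticalCauchyTransform, ← reCLM_apply, ← reCLM.integral_comp_comm hint]
  rfl

lemma abs_re_verticalCauchyTransform_le (E : Set ℝ) (w : ℂ) :
    |(verticalCauchyTransform E w).re| ≤ π := by
  by_cases hint : Integrable (fun y : ℝ => (w - y * I)⁻¹) (volume.restrict E)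
  swap
  · simp [verticalCauchyTransform, integral_undef hint, Real.pi_nonneg]
  have hpdf : ∫ y, cauchyPDFReal w.im (Real.nnabs w.re) y ≤ 1 := by
    by_cases hγ : Real.nnabs w.re = 0
    · simp [hγ]
    · rw [integral_cauchyPDFReal_eq_one _ hγ]
  calc |(verticalCauchyTransform E w).re| = |∫ y in E, ((w - y * I)⁻¹).re| := by
        rw [re_verticalCauchyTransform hint]
    _ ≤ ∫ y in E, |((w - y * I)⁻¹).re| := abs_integral_le_integral_abs
    _ = ∫ y in E, π * cauchyPDFReal w.im (Real.nnabs w.re) y := by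
        simp_rw [abs_re_inv_sub_ofReal_mul_I]
    _ ≤ ∫ y, π * cauchyPDFReal w.im (Real.nnabs w.re) y :=
        setIntegral_le_integral ((integrable_cauchyPDFReal _).const_mul _)
          (.of_forall fun y => by
            simp only [Pi.zero_apply, ← abs_re_inv_sub_ofReal_mul_I, abs_nonneg])
    _ ≤ π := by
        rw [integral_const_mul]
        exact mul_le_of_le_one_right Real.pi_nonneg hpdf

lemma measurable_verticalCauchyTransform (E : Set ℝ) : Measurable (verticalCauchyTransform E) :=
  (Measurable.stronglyMeasurable (by fun_prop : Measurable fun p : ℂ × ℝ => (p.1 - p.2 * I)⁻¹)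
    ).integral_prod_right'.measurable

lemma differentiableOn_verticalCauchyTransform (hE : IsCompact E) :
    DifferentiableOn ℂ (verticalCauchyTransform E) ({0} ×ℂ E)ᶜ := by
  have : IsFiniteMeasure (volume.restrict E) := isFiniteMeasure_restrict.2 hE.measure_lt_top.ne
  intro w₀ hw₀
  obtain ⟨ε, hε, hball⟩ :=
    Metric.isOpen_iff.1 (isClosed_singleton.reProdIm hE.isClosed).isOpen_compl w₀ hw₀
  have hfar : ∀ y ∈ E, ∀ w ∈ ball (w₀ - y * I) (ε / 2), ε / 2 ≤ ‖w‖ := by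
    intro y hy w hw
    by_contra! hlt
    refine hball (a := y * I) ?_ (by simp [mem_reProdIm, hy])
    rw [mem_ball] at hw ⊢
    calc dist (y * I : ℂ) w₀ = ‖w - (w - (w₀ - y * I))‖ := by
          rw [dist_comm, dist_eq_norm, sub_sub_cancel]
      _ ≤ ‖w‖ + dist w (w₀ - y * I) := by rw [dist_eq_norm]; exact norm_sub_le _ _
      _ < ε := by linarith
  refine (differentiableAt_integral_comp_sub (h := Inv.inv) (φ := fun y : ℝ => (y : ℂ) * I)
    measurable_inv (by fun_prop) (half_pos hε) ?_ ?_ (B := (ε / 2)⁻¹)).differentiableWithinAt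
  · filter_upwards [ae_restrict_mem hE.measurableSet] with y hy w hw
    exact (differentiableAt_inv (norm_pos_iff.1 ((half_pos hε).trans_le (hfar y hy w hw)))
      ).differentiableWithinAt
  · filter_upwards [ae_restrict_mem hE.measurableSet] with y hy w hw
    rw [norm_inv]
    exact inv_anti₀ (half_pos hε) (hfar y hy w hw)

lemma tendsto_verticalCauchyTransform_cocompact (hE : IsCompact E) :
    Tendsto (verticalCauchyTransform E) (cocompact ℂ) (𝓝 0) :=
  have : IsFiniteMeasure (volume.restrict E) := isFiniteMeasure_restrict.2 hE.measure_lt_top.ne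
  tendsto_integral_comp_sub_cocompact (h := Inv.inv) (φ := fun y : ℝ => (y : ℂ) * I)
    (cobounded_eq_cocompact (α := ℂ) ▸ tendsto_inv₀_cobounded) (hE.image (by fun_prop))
    ((ae_restrict_mem hE.measurableSet).mono fun y hy => mem_image_of_mem _ hy)

lemma re_verticalCauchyTransform_pos (hfin : volume E ≠ ∞) (hpos : 0 < volume E)
    (hw : 0 < w.re) : 0 < (verticalCauchyTransform E w).re := by
  have : IsFiniteMeasure (volume.restrict E) := isFiniteMeasure_restrict.2 hfin
  have hint : IntegrableOn (fun y : ℝ => (w - y * I)⁻¹) E :=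
    Integrable.of_bound (by fun_prop : Measurable fun y : ℝ => (w - y * I)⁻¹).aestronglyMeasurable
      w.re⁻¹ (.of_forall fun y => by
        rw [norm_inv]
        exact inv_anti₀ hw (by simpa [abs_of_pos hw] using abs_re_le_norm (w - y * I)))
  have hkernel : ∀ y : ℝ, 0 < ((w - y * I)⁻¹).re := fun y => by
    rw [re_inv_sub_ofReal_mul_I]; positivity
  rw [re_verticalCauchyTransform hint,
    setIntegral_pos_iff_support_of_nonneg_ae (.of_forall fun y => (hkernel y).le) hint.re,
    Function.support_eq_univ fun y => (hkernel y).ne', univ_inter]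
  exact hpos

end VerticalCauchyTransform

lemma exists_isProbabilityMeasure_nullSingletonClass_ae_mem {α : Type*} [MeasurableSpace α]
    [StandardBorelSpace α] {s : Set α} (hs : MeasurableSet s) (hunc : ¬s.Countable) :
    ∃ μ : Measure α, IsProbabilityMeasure μ ∧ NullSingletonClass μ ∧ ∀ᵐ x ∂μ, x ∈ s := by
  have := hs.standardBorel
  have hI : ¬Countable unitInterval := fun h => by
    simpa using (countable_univ (α := unitInterval)).measure_zero volume
  let e : unitInterval ≃ᵐ s :=
    PolishSpace.measurableEquivOfNotCountable hI (by rwa [countable_coe_iff])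
  have he : MeasurableEmbedding ((↑) ∘ e : unitInterval → α) :=
    (MeasurableEmbedding.subtype_coe hs).comp e.measurableEmbedding
  refine ⟨volume.map ((↑) ∘ e), Measure.isProbabilityMeasure_map he.measurable.aemeasurable,
    ⟨fun x => ?_⟩, he.ae_map_iff.2 (.of_forall fun x => (e x).2)⟩
  rw [he.map_apply]
  exact ((subsingleton_singleton).preimage he.injective).measure_zero _

section CarlesonFunction

variable {E E₁ E₂ : Set ℝ} {w : ℂ}

noncomputable def carlesonKernel (E : Set ℝ) (w : ℂ) : ℂ := exp (-verticalCauchyTransform E w) - 1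

lemma norm_carlesonKernel_le (E : Set ℝ) (w : ℂ) : ‖carlesonKernel E w‖ ≤ Real.exp π + 1 := by
  have hexp : ‖exp (-verticalCauchyTransform E w)‖ ≤ Real.exp π := by
    rw [norm_exp, neg_re, Real.exp_le_exp]
    linarith [neg_abs_le (verticalCauchyTransform E w).re, abs_re_verticalCauchyTransform_le E w]
  calc ‖carlesonKernel E w‖ ≤ ‖exp (-verticalCauchyTransform E w)‖ + ‖(1 : ℂ)‖ := norm_sub_le _ _
    _ ≤ Real.exp π + 1 := by rw [norm_one]; linarith

lemma measurable_carlesonKernel (E : Set ℝ) : Measurable (carlesonKernel E) :=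
  (measurable_exp.comp (measurable_verticalCauchyTransform E).neg).sub_const 1

lemma differentiableOn_carlesonKernel (hE : IsCompact E) :
    DifferentiableOn ℂ (carlesonKernel E) ({0} ×ℂ E)ᶜ :=
  (differentiableOn_verticalCauchyTransform hE).neg.cexp.sub_const 1

lemma tendsto_carlesonKernel_cocompact (hE : IsCompact E) :
    Tendsto (carlesonKernel E) (cocompact ℂ) (𝓝 0) := by
  have := ((tendsto_verticalCauchyTransform_cocompact hE).neg.cexp).sub_const 1
  rwa [neg_zero, exp_zero, sub_self] at this

lemma re_carlesonKernel_neg (hfin : volume E ≠ ∞) (hpos : 0 < volume E) (hw : 0 < w.re) :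
    (carlesonKernel E w).re < 0 := by
  have hG := re_verticalCauchyTransform_pos hfin hpos hw
  calc (carlesonKernel E w).re = (exp (-verticalCauchyTransform E w)).re - 1 := by
        simp [carlesonKernel]
    _ ≤ Real.exp (-(verticalCauchyTransform E w).re) - 1 := by
        rw [← neg_re, ← norm_exp]; linarith [re_le_norm (exp (-verticalCauchyTransform E w))]
    _ < 0 := by linarith [Real.exp_lt_one_iff.2 (neg_neg_of_pos hG)]

noncomputable def carlesonFunction (μ : Measure ℝ) (E : Set ℝ) (z : ℂ) : ℂ :=
  ∫ x, carlesonKernel E (z - x) ∂μ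

variable {μ : Measure ℝ} [IsFiniteMeasure μ]

lemma continuous_carlesonFunction [NullSingletonClass μ] (hE : IsCompact E) :
    Continuous (carlesonFunction μ E) :=
  continuous_integral_comp_sub_ofReal (measurable_carlesonKernel E) (norm_carlesonKernel_le E)
    fun w hw => ((differentiableOn_carlesonKernel hE).differentiableAt
      ((isClosed_singleton.reProdIm hE.isClosed).isOpen_compl.mem_nhds
        (by simp [mem_reProdIm, hw]))).continuousAt

lemma differentiableOn_carlesonFunction (hμ : ∀ᵐ x ∂μ, x ∈ E₁) (h₁ : IsClosed E₁)
    (h₂ : IsCompact E₂) : DifferentiableOn ℂ (carlesonFunction μ E₂) (E₁ ×ℂ E₂)ᶜ := by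
  intro z₀ hz₀
  obtain ⟨r, hr, hball⟩ := Metric.isOpen_iff.1 (h₁.reProdIm h₂.isClosed).isOpen_compl z₀ hz₀
  have hsub : ∀ x ∈ E₁, ball (z₀ - x) r ⊆ ({0} ×ℂ E₂)ᶜ := by
    intro x hx w hw hwK
    refine hball (a := w + x) ?_ ?_
    · rwa [mem_ball, ← dist_sub_right _ _ (x : ℂ), add_sub_cancel_right]
    · simp_all [mem_reProdIm]
  refine (differentiableAt_integral_comp_sub (measurable_carlesonKernel E₂) measurable_ofReal hr
    (hμ.mono fun x hx => (differentiableOn_carlesonKernel h₂).mono (hsub x hx))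
    (.of_forall fun _ w _ => norm_carlesonKernel_le E₂ w)).differentiableWithinAt

lemma tendsto_carlesonFunction_cocompact (hμ : ∀ᵐ x ∂μ, x ∈ E₁) (h₁ : IsCompact E₁)
    (h₂ : IsCompact E₂) : Tendsto (carlesonFunction μ E₂) (cocompact ℂ) (𝓝 0) :=
  tendsto_integral_comp_sub_cocompact (tendsto_carlesonKernel_cocompact h₂)
    (h₁.image continuous_ofReal) (hμ.mono fun _ hx => mem_image_of_mem _ hx)

lemma re_carlesonFunction_neg [NeZero μ] (hμ : ∀ᵐ x ∂μ, x ∈ E₁) (hfin : volume E₂ ≠ ∞)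
    (hpos : 0 < volume E₂) {t : ℝ} (ht : ∀ x ∈ E₁, x < t) :
    (carlesonFunction μ E₂ t).re < 0 := by
  set g : ℝ → ℝ := fun x => -(carlesonKernel E₂ (t - x)).re
  have hint : Integrable (fun x : ℝ => carlesonKernel E₂ (t - x)) μ :=
    .of_bound ((measurable_carlesonKernel E₂).comp (measurable_const.sub measurable_ofReal)
      ).aestronglyMeasurable _ (.of_forall fun x => norm_carlesonKernel_le E₂ _)
  have hg : ∀ᵐ x ∂μ, 0 < g x := hμ.mono fun x hx =>
    neg_pos.2 (re_carlesonKernel_neg hfin hpos (by simpa using ht x hx))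
  have hsupp : μ (Function.support g) = μ univ :=
    measure_congr (ae_eq_univ.2 (ae_iff.1 (hg.mono fun x hx => hx.ne')))
  have : 0 < ∫ x, g x ∂μ := by
    rw [integral_pos_iff_support_of_nonneg_ae (hg.mono fun x hx => hx.le) hint.re.neg, hsupp]
    exact Measure.measure_univ_pos.2 (NeZero.ne μ)
  rw [carlesonFunction, ← reCLM_apply, ← reCLM.integral_comp_comm hint]
  simpa [g, integral_neg] using this

end CarlesonFunction

theorem not_aRemovable_reProdIm_of_not_countable {E₁ E₂ : Set ℝ} (h₁ : IsCompact E₁)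
    (h₂ : IsCompact E₂) (hpos : 0 < volume E₂) (hunc : ¬E₁.Countable) : ¬ARemovable (E₁ ×ℂ E₂) := by
  intro hrem
  obtain ⟨μ, _, _, hμ⟩ :=
    exists_isProbabilityMeasure_nullSingletonClass_ae_mem h₁.measurableSet hunc
  obtain ⟨t, ht⟩ : ∃ t : ℝ, ∀ x ∈ E₁, x < t :=
    let ⟨b, hb⟩ := h₁.bddAbove
    ⟨b + 1, fun x hx => (hb hx).trans_lt (lt_add_one b)⟩
  have hlim := tendsto_carlesonFunction_cocompact (E₂ := E₂) hμ h₁ h₂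
  have hconst := hrem _ (continuous_carlesonFunction h₂)
    (differentiableOn_carlesonFunction hμ h₁.isClosed h₂) ⟨0, hlim⟩
  have hzero : carlesonFunction μ E₂ t = 0 :=
    tendsto_nhds_unique (tendsto_const_nhds.congr (hconst _)) hlim
  have hneg := re_carlesonFunction_neg hμ h₂.measure_lt_top.ne hpos ht
  rw [hzero, zero_re] at hneg
  exact hneg.false

lemma setOf_ofReal_add_ofReal_mul_I_eq_reProdIm (s t : Set ℝ) :
    {z : ℂ | ∃ x ∈ s, ∃ y ∈ t, z = x + y * I} = s ×ℂ t := by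
  ext z
  refine ⟨?_, fun ⟨hx, hy⟩ => ⟨z.re, hx, z.im, hy, (re_add_im z).symm⟩⟩
  rintro ⟨x, hx, y, hy, rfl⟩
  simpa [mem_reProdIm] using ⟨hx, hy⟩

/-- (Carleson) For compact sets `E₁, E₂ ⊆ ℝ` with `E₂` of positive Lebesgue measure, the
product set `E₁ × E₂ ⊆ ℂ` is `A`-removable if and only if `E₁` is countable. -/
theorem stmt_12 (E₁ E₂ : Set ℝ) (h₁ : IsCompact E₁) (h₂ : IsCompact E₂)
    (hpos : 0 < volume E₂) :
    ARemovable {z : ℂ | ∃ x ∈ E₁, ∃ y ∈ E₂, z = x + y * Complex.I} ↔ E₁.Countable := by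
  rw [setOf_ofReal_add_ofReal_mul_I_eq_reProdIm]
  refine ⟨fun hrem => by_contra fun hunc =>
      not_aRemovable_reProdIm_of_not_countable h₁ h₂ hpos hunc hrem,
    fun hcnt => aRemovable_of_countable_image_re (h₁.isClosed.reProdIm h₂.isClosed) ?_⟩
  exact hcnt.mono (image_subset_iff.2 fun _ hz => hz.1)
end

section
/- Let E ⊆ ℂ be a compact H∞-removable set. Then every injective holomorphic map on ℂ \ E that tends to ∞ at ∞ is affine: if f is holomorphic and injective on ℂ \ E and f(z) → ∞ as z → ∞ (i.e. f tends to the cocompact filter along the cocompact filter), then there exist a, b ∈ ℂ with a ≠ 0 such that f(z) = a z + b for all z ∈ ℂ \ E. (This is the planar form of the statement that H∞-removable sets are S-removable.) -/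
/-!
Pick `ζ ∉ E` with `f' ζ ≠ 0`. The function `(f' ζ * (z - ζ))⁻¹ - (f z - f ζ)⁻¹` extends
holomorphically across `ζ`. It is bounded on `ℂ \ E`: near `E` because injectivity together with
the local surjectivity of `f` at `ζ` keeps `f z` away from `f ζ`. It also tends to `0` at `∞`.
By `H∞`-removability it is constant, hence zero, and that says exactly that `f` is affine.
-/

open Filter

open Set Metric Topology

section

variable {𝕜 : Type*} [NontriviallyNormedField 𝕜]

theorem dslope_ne_zero_of_injOn {F : Type*} [NormedAddCommGroup F] [NormedSpace 𝕜 F]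
    {f : 𝕜 → F} {U : Set 𝕜} {ζ z : 𝕜} (hinj : InjOn f U) (hζ : ζ ∈ U) (hz : z ∈ U)
    (hf' : deriv f ζ ≠ 0) : dslope f ζ z ≠ 0 := by
  intro h
  obtain rfl : z = ζ := hinj hz hζ <| sub_eq_zero.mp <| by rw [← sub_smul_dslope, h, smul_zero]
  exact hf' (by rwa [dslope_same] at h)

theorem HasStrictDerivAt.exists_pos_le_dist_of_injOn [CompleteSpace 𝕜] {f : 𝕜 → 𝕜}
    {a ζ : 𝕜} {U V : Set 𝕜} (hf : HasStrictDerivAt f a ζ) (ha : a ≠ 0) (hinj : InjOn f U)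
    (hV : V ∈ 𝓝 ζ) (hVU : V ⊆ U) : ∃ r > 0, ∀ z ∈ U \ V, r ≤ dist (f z) (f ζ) := by
  have hfV : f '' V ∈ 𝓝 (f ζ) := hf.map_nhds_eq ha ▸ image_mem_map hV
  obtain ⟨r, hr, hball⟩ := Metric.mem_nhds_iff.mp hfV
  refine ⟨r, hr, fun z ⟨hzU, hzV⟩ => not_lt.mp fun hzr => hzV ?_⟩
  obtain ⟨w, hwV, hwz⟩ := hball hzr
  rwa [hinj hzU (hVU hwV) hwz.symm]

end

theorem exists_deriv_ne_zero_of_injOn {f : ℂ → ℂ} {U : Set ℂ} (hU : IsOpen U) (hne : U.Nonempty)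
    (hf : DifferentiableOn ℂ f U) (hinj : InjOn f U) : ∃ ζ ∈ U, deriv f ζ ≠ 0 := by
  obtain ⟨z, hz⟩ := hne
  obtain ⟨ε, hε, hball⟩ := Metric.isOpen_iff.mp hU z hz
  by_contra! hderiv
  have hw : z + (ε / 2 : ℝ) ∈ ball z ε := by
    rw [mem_ball, dist_self_add_left, Complex.norm_real, Real.norm_of_nonneg (by positivity)]
    linarith
  have := hinj (hball hw) hz <| isOpen_ball.is_const_of_deriv_eq_zero
    (convex_ball z ε).isPreconnected (hf.mono hball) (fun w hw => hderiv w (hball hw)) hw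
    (mem_ball_self hε)
  simp [hε.ne'] at this

/-- `(f' ζ * (z - ζ))⁻¹ - (f z - f ζ)⁻¹`, written through `dslope` so that it is holomorphic at
`ζ` as well. -/
noncomputable def inverseDefect (f : ℂ → ℂ) (ζ z : ℂ) : ℂ :=
  dslope (dslope f ζ) ζ z / (deriv f ζ * dslope f ζ z)

theorem inverseDefect_of_ne {f : ℂ → ℂ} {ζ z : ℂ} (hz : z ≠ ζ) (hfz : f z ≠ f ζ)
    (ha : deriv f ζ ≠ 0) :
    inverseDefect f ζ z = (deriv f ζ * (z - ζ))⁻¹ - (f z - f ζ)⁻¹ := by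
  have hζz : z - ζ ≠ 0 := sub_ne_zero.mpr hz
  have hfζz : f z - f ζ ≠ 0 := sub_ne_zero.mpr hfz
  rw [inverseDefect, dslope_of_ne _ hz, slope_def_field, dslope_same, dslope_of_ne _ hz,
    slope_def_field]
  field_simp

theorem differentiableOn_inverseDefect {f : ℂ → ℂ} {U : Set ℂ} {ζ : ℂ} (hU : IsOpen U)
    (hζ : ζ ∈ U) (hf : DifferentiableOn ℂ f U) (hinj : InjOn f U) (ha : deriv f ζ ≠ 0) :
    DifferentiableOn ℂ (inverseDefect f ζ) U := by
  have hg : DifferentiableOn ℂ (dslope f ζ) U :=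
    (Complex.differentiableOn_dslope (hU.mem_nhds hζ)).mpr hf
  exact ((Complex.differentiableOn_dslope (hU.mem_nhds hζ)).mpr hg).div
    ((differentiableOn_const _).mul hg)
    fun z hz => mul_ne_zero ha (dslope_ne_zero_of_injOn hinj hζ hz ha)

theorem exists_norm_inverseDefect_le {f : ℂ → ℂ} {U : Set ℂ} {ζ : ℂ} (hU : IsOpen U)
    (hζ : ζ ∈ U) (hf : DifferentiableOn ℂ f U) (hinj : InjOn f U) (ha : deriv f ζ ≠ 0) :
    ∃ M, ∀ z ∈ U, ‖inverseDefect f ζ z‖ ≤ M := by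
  obtain ⟨ε, hε, hεU⟩ := nhds_basis_closedBall.mem_iff.mp (hU.mem_nhds hζ)
  obtain ⟨M, hM⟩ := (isCompact_closedBall ζ ε).exists_bound_of_continuousOn
    ((differentiableOn_inverseDefect hU hζ hf hinj ha).continuousOn.mono hεU)
  have hfs : HasStrictDerivAt f (deriv f ζ) ζ :=
    (hf.analyticOnNhd hU ζ hζ).hasStrictDerivAt
  obtain ⟨r, hr, hfar⟩ := hfs.exists_pos_le_dist_of_injOn ha hinj (closedBall_mem_nhds ζ hε) hεU
  refine ⟨max M ((‖deriv f ζ‖ * ε)⁻¹ + r⁻¹), fun z hz => ?_⟩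
  by_cases hzε : z ∈ closedBall ζ ε
  · exact le_max_of_le_left (hM z hzε)
  have hεz : ε < ‖z - ζ‖ := by simpa [dist_eq_norm] using hzε
  have hrz : r ≤ ‖f z - f ζ‖ := by simpa [dist_eq_norm] using hfar z ⟨hz, hzε⟩
  have hz' : z ≠ ζ := fun h => hzε (h ▸ mem_closedBall_self hε.le)
  rw [inverseDefect_of_ne hz' (fun h => hz' (hinj hz hζ h)) ha]
  refine le_max_of_le_right ((norm_sub_le _ _).trans (add_le_add ?_ ?_))
  · rw [norm_inv, norm_mul]
    have hapos := norm_pos_iff.mpr ha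
    gcongr
  · rw [norm_inv]
    gcongr

theorem tendsto_inverseDefect_cocompact {f : ℂ → ℂ} {ζ : ℂ}
    (hf : Tendsto f (cocompact ℂ) (cocompact ℂ)) (ha : deriv f ζ ≠ 0) :
    Tendsto (inverseDefect f ζ) (cocompact ℂ) (𝓝 0) := by
  have hinv {g : ℂ → ℂ} (hg : Tendsto g (cocompact ℂ) (cocompact ℂ)) :
      Tendsto (fun z => (g z)⁻¹) (cocompact ℂ) (𝓝 0) :=
    tendsto_inv₀_cobounded.comp (cobounded_eq_cocompact (α := ℂ) ▸ hg)
  have hlin := hinv ((Homeomorph.subRight ζ).trans (Homeomorph.mulLeft₀ _ ha)).map_cocompact.le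
  have hfζ := hinv (Tendsto.comp (Homeomorph.subRight (f ζ)).map_cocompact.le hf)
  have hne (w : ℂ) : ∀ᶠ z in cocompact ℂ, z ≠ w := isCompact_singleton.compl_mem_cocompact
  have hev : ∀ᶠ z in cocompact ℂ, z ≠ ζ ∧ f z ≠ f ζ := (hne ζ).and (hf.eventually (hne (f ζ)))
  simpa using (hlin.sub hfζ).congr' <| hev.mono fun z ⟨hz, hfz⟩ =>
    (inverseDefect_of_ne hz hfz ha).symm

/-- An `H∞`-removable compact set is `S`-removable (planar form): every injective
holomorphic map on `ℂ \ E` tending to `∞` at `∞` is affine. -/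
theorem stmt_13 (E : Set ℂ) (hE : IsCompact E) (hrem : HInftyRemovable E)
    (f : ℂ → ℂ) (hf : DifferentiableOn ℂ f Eᶜ) (hinj : Set.InjOn f Eᶜ)
    (hinfty : Tendsto f (cocompact ℂ) (cocompact ℂ)) :
    ∃ a b : ℂ, a ≠ 0 ∧ ∀ z ∈ Eᶜ, f z = a * z + b := by
  have hU : IsOpen Eᶜ := hE.isClosed.isOpen_compl
  obtain ⟨ζ, hζ, ha⟩ :=
    exists_deriv_ne_zero_of_injOn hU (nonempty_of_mem hE.compl_mem_cocompact) hf hinj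
  have hconst := hrem _ (differentiableOn_inverseDefect hU hζ hf hinj ha)
    (exists_norm_inverseDefect_le hU hζ hf hinj ha)
  have hzero : inverseDefect f ζ ζ = 0 :=
    tendsto_nhds_unique (tendsto_const_nhds.congr' <| eventuallyEq_of_mem hE.compl_mem_cocompact
      fun z hz => hconst ζ hζ z hz) (tendsto_inverseDefect_cocompact hinfty ha)
  refine ⟨deriv f ζ, f ζ - deriv f ζ * ζ, ha, fun z hz => ?_⟩
  rcases eq_or_ne z ζ with rfl | hzζ
  · ring
  have hfz : f z ≠ f ζ := fun h => hzζ (hinj hz hζ h)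
  have h := (hconst z hz ζ hζ).trans hzero
  rw [inverseDefect_of_ne hzζ hfz ha, sub_eq_zero] at h
  linear_combination -inv_injective h
end

section
/- Let E ⊆ ℂ be a compact A-removable set. Then E is CH-removable: every homeomorphism of ℂ onto itself that is holomorphic on ℂ \ E is an affine map z ↦ a z + b with a ≠ 0. -/
open Filter

/-- A compact set `E ⊆ ℂ` is `CH`-removable if every homeomorphism of `ℂ` onto itself that
is holomorphic on `ℂ \ E` is an affine map `z ↦ a z + b` with `a ≠ 0`. -/
def CHRemovable (E : Set ℂ) : Prop :=
  ∀ φ : ℂ ≃ₜ ℂ, DifferentiableOn ℂ (⇑φ) Eᶜ →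
    ∃ a b : ℂ, a ≠ 0 ∧ ∀ z : ℂ, φ z = a * z + b

/-!
Near infinity `φ` is holomorphic and tends to infinity, so `1 / φ (1/w)` has a removable
singularity at `w = 0` and `w ↦ φ (1/w)` is meromorphic there: `φ z = z ^ n * k (1/z)` for large
`z`, with `k` analytic at `0`. Peeling off the leading term `k 0 * z ^ n` lowers `n` by one, and
when `n = 0` the function has a finite limit at infinity, so `A`-removability makes it constant.
Hence `φ` is a polynomial, and an injective complex polynomial has degree one.
-/

open Function Polynomial Topology

namespace Polynomial

theorem exists_eq_C_mul_X_pow_add_C_of_injective_eval {K : Type*} [Field K] [IsAlgClosed K]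
    {P : K[X]} (hP : Injective P.eval) :
    ∃ a : K, P = C a * X ^ P.natDegree + C (P.eval 0) := by
  set Q := P - C (P.eval 0)
  have hroots : Q.roots = Multiset.replicate Q.natDegree 0 := by
    rw [← IsAlgClosed.card_roots_eq_natDegree, Multiset.eq_replicate_card]
    intro r hr
    exact hP (by simpa [Q, sub_eq_zero] using (mem_roots'.mp hr).2)
  have hQ := C_leadingCoeff_mul_prod_multiset_X_sub_C (IsAlgClosed.card_roots_eq_natDegree (p := Q))
  rw [hroots, natDegree_sub_C] at hQ
  simp only [Multiset.map_replicate, map_zero, sub_zero, Multiset.prod_replicate] at hQ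
  exact ⟨Q.leadingCoeff, by rw [hQ, sub_add_cancel]⟩

theorem natDegree_eq_one_of_injective_eval {P : ℂ[X]} (hP : Injective P.eval) :
    P.natDegree = 1 := by
  obtain ⟨a, hPa⟩ := exists_eq_C_mul_X_pow_add_C_of_injective_eval hP
  set n := P.natDegree
  have hn : n ≠ 0 := fun h0 => zero_ne_one (hP (by rw [hPa, h0]; simp))
  have hζ := Complex.isPrimitiveRoot_exp n hn
  by_contra hn1
  refine hζ.ne_one (by omega) (hP ?_)
  rw [hPa]
  simp [hζ.pow_eq_one]

end Polynomial

theorem AnalyticAt.dslope {𝕜 E : Type*} [NontriviallyNormedField 𝕜] [NormedAddCommGroup E]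
    [NormedSpace 𝕜 E] {f : 𝕜 → E} {a : 𝕜} (hf : AnalyticAt 𝕜 f a) :
    AnalyticAt 𝕜 (dslope f a) a :=
  let ⟨_, hp⟩ := hf
  ⟨_, hp.has_fpower_series_dslope_fslope⟩

theorem tendsto_inv₀_cocompact {𝕜 : Type*} [NormedDivisionRing 𝕜] [ProperSpace 𝕜] :
    Tendsto (·⁻¹) (cocompact 𝕜) (𝓝 0) :=
  Metric.cobounded_eq_cocompact (α := 𝕜) ▸ tendsto_inv₀_cobounded

theorem eventually_ne_cocompact {X : Type*} [TopologicalSpace X] (a : X) :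
    ∀ᶠ z in cocompact X, z ≠ a :=
  isCompact_singleton.compl_mem_cocompact

theorem meromorphicAt_comp_inv_of_tendsto_cocompact {f : ℂ → ℂ}
    (hd : ∀ᶠ z in cocompact ℂ, DifferentiableAt ℂ f z)
    (hf : Tendsto f (cocompact ℂ) (cocompact ℂ)) :
    MeromorphicAt (fun w => f w⁻¹) 0 := by
  have hinv : Tendsto (·⁻¹) (𝓝[≠] (0 : ℂ)) (cocompact ℂ) :=
    Metric.cobounded_eq_cocompact (α := ℂ) ▸ tendsto_inv₀_nhdsNE_zero
  set g : ℂ → ℂ := update (fun w => (f w⁻¹)⁻¹) 0 0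
  have hg_diff : ∀ᶠ w in 𝓝[≠] 0, DifferentiableAt ℂ g w := by
    filter_upwards [hinv.eventually (hd.and (hf.eventually (eventually_ne_cocompact 0))),
      self_mem_nhdsWithin] with w ⟨hdw, hfw⟩ hw
    have : (fun w => (f w⁻¹)⁻¹) =ᶠ[𝓝 w] g := by
      filter_upwards [isOpen_ne.mem_nhds hw] with v hv
      simp [g, update_of_ne hv]
    exact ((hdw.comp w (differentiableAt_inv hw)).inv hfw).congr_of_eventuallyEq this.symm
  have hg_cont : ContinuousAt g 0 :=
    continuousAt_update_same.mpr (tendsto_inv₀_cocompact.comp (hf.comp hinv))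
  refine ((Complex.analyticAt_of_differentiable_on_punctured_nhds_of_continuousAt hg_diff
    hg_cont).meromorphicAt.inv).congr ?_
  filter_upwards [self_mem_nhdsWithin] with w hw
  simp [g, update_of_ne hw]

namespace ARemovable

variable {E : Set ℂ}

theorem exists_polynomial_of_eventually_eq_pow_mul (hE : ARemovable E) {n : ℕ} {f k : ℂ → ℂ}
    (hf : Continuous f) (hfd : DifferentiableOn ℂ f Eᶜ) (hk : AnalyticAt ℂ k 0)
    (hfk : ∀ᶠ z in cocompact ℂ, f z = z ^ n * k z⁻¹) : ∃ P : ℂ[X], ∀ z, f z = P.eval z := by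
  induction n generalizing f k with
  | zero =>
    have hlim : Tendsto f (cocompact ℂ) (𝓝 (k 0)) :=
      (hk.continuousAt.tendsto.comp tendsto_inv₀_cocompact).congr' <| by
        filter_upwards [hfk] with z hz
        simp [hz]
    exact ⟨C (f 0), fun z => by simpa using hE f hf hfd ⟨_, hlim⟩ z 0⟩
  | succ n ih =>
    obtain ⟨P, hP⟩ := ih (f := fun z => f z - k 0 * z ^ (n + 1)) (k := dslope k 0)
      (by fun_prop) (hfd.sub (by fun_prop)) hk.dslope <| by
        filter_upwards [hfk, eventually_ne_cocompact 0] with z hz hz0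
        have := sub_smul_dslope k 0 z⁻¹
        simp only [sub_zero, smul_eq_mul] at this
        rw [hz]
        linear_combination (-z ^ (n + 1)) * this + z ^ n * dslope k 0 z⁻¹ * mul_inv_cancel₀ hz0
    exact ⟨P + C (k 0) * X ^ (n + 1), fun z => by simp [← hP z]⟩

theorem exists_polynomial_of_meromorphicAt_comp_inv (hE : ARemovable E) {f : ℂ → ℂ}
    (hf : Continuous f) (hfd : DifferentiableOn ℂ f Eᶜ)
    (hmer : MeromorphicAt (fun w => f w⁻¹) 0) : ∃ P : ℂ[X], ∀ z, f z = P.eval z := by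
  obtain ⟨n, hk⟩ := hmer
  refine hE.exists_polynomial_of_eventually_eq_pow_mul (n := n) hf hfd hk ?_
  filter_upwards [eventually_ne_cocompact 0] with z hz
  simp [hz]

end ARemovable

/-- Every compact `A`-removable set is `CH`-removable. -/
theorem stmt_15 (E : Set ℂ) (hE : IsCompact E) (hrem : ARemovable E) :
    CHRemovable E := by
  intro φ hφ
  have hd : ∀ᶠ z in cocompact ℂ, DifferentiableAt ℂ φ z :=
    eventually_of_mem hE.compl_mem_cocompact fun _ hz =>
      hφ.differentiableAt (hE.isClosed.isOpen_compl.mem_nhds hz)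
  obtain ⟨P, hP⟩ := hrem.exists_polynomial_of_meromorphicAt_comp_inv φ.continuous hφ
    (meromorphicAt_comp_inv_of_tendsto_cocompact hd φ.map_cocompact.le)
  have hdeg : P.natDegree = 1 :=
    natDegree_eq_one_of_injective_eval (by simpa only [← funext hP] using φ.injective)
  refine ⟨P.coeff 1, P.coeff 0, ?_, fun z => ?_⟩
  · exact hdeg ▸ leadingCoeff_ne_zero.mpr (ne_zero_of_natDegree_gt (n := 0) (by omega))
  · rw [hP z, eq_X_add_C_of_natDegree_le_one hdeg.le]
    simp
end
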